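/- arXiv:math/0211445 — 6 statements merged into one kernel-verified Lean document; each statement's English description precedes it below -/
import Mathlib

section
/- Let (d_G)_G be a family assigning to every domain G ⊆ ℂⁿ (for every n ∈ ℕ) a function d_G : ℝ₊^G × G → ℝ₊. Assume (H): for all domains G ⊆ ℂⁿ, D ⊆ ℂᵐ, every holomorphic map F : G → D and every q : D → ℝ₊, one has d_D(q, F(z)) ≤ d_G(q ∘ F, z) for all z ∈ G; and (E⁺): d_E(p, λ) ≤ inf{[m_E(μ,λ)]^{p(μ)} : μ ∈ E} for all p : E → ℝ₊ and λ ∈ E. Then d_G(p, z) ≤ d_G^max(p, z) for every domain G ⊆ ℂⁿ, every p : G → ℝ₊ and every z ∈ G. -/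
open Complex Set Filter Asymptotics
open Metric Topology
open scoped ENNReal

noncomputable section

/-- The open unit disc `E ⊆ ℂ`. -/
def discE : Set ℂ := {z : ℂ | ‖z‖ < 1}

/-- The Möbius function `m_E(a,z) = |(z-a)/(1 - conj a · z)|`. -/
def mE (a z : ℂ) : ℝ := ‖(z - a) / (1 - (starRingEnd ℂ) a * z)‖

/-- A domain: a nonempty open connected set. -/
def IsDom {V : Type*} [NormedAddCommGroup V] [NormedSpace ℂ V] (G : Set V) : Prop :=
  IsOpen G ∧ IsConnected G

variable {V W : Type*} [NormedAddCommGroup V] [NormedSpace ℂ V]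
  [NormedAddCommGroup W] [NormedSpace ℂ W]

/-- `ord_a f ≥ k` : `f(w) = O(‖w - a‖^k)` as `w → a`. -/
def OrdGE (f : V → ℂ) (a : V) (k : ℕ) : Prop :=
  f =O[nhds a] fun w => ‖w - a‖ ^ k

/-- The generalized Möbius function `m_G(p, z)` with integer weights `p`. -/
def mFun (G : Set V) (p : V → ℕ) (z : V) : ℝ :=
  sSup {r : ℝ | ∃ f : V → ℂ, DifferentiableOn ℂ f G ∧ MapsTo f G discE ∧
    (∀ a ∈ G, OrdGE f a (p a)) ∧ r = ‖f z‖}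

/-- The Lempert function `k̃*_G(a,z)`. -/
def lemp (G : Set V) (a z : V) : ℝ :=
  sInf {r : ℝ | ∃ μ ∈ discE, ∃ φ : ℂ → V, DifferentiableOn ℂ φ discE ∧
    MapsTo φ discE G ∧ φ 0 = a ∧ φ μ = z ∧ r = ‖μ‖}

/-- `d_G^max(p,z) = inf { k̃*_G(a,z) ^ p(a) : a ∈ G }` (real exponents). -/
def dMax (G : Set V) (p : V → ℝ) (z : V) : ℝ :=
  sInf {r : ℝ | ∃ a ∈ G, r = lemp G a z ^ p a}

/-- Possibly infinite product `∏_{a ∈ A} h a`, defined as the infimum of finite subproducts. -/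
def infProd {α : Type*} (A : Set α) (h : α → ℝ) : ℝ :=
  sInf {r : ℝ | ∃ B : Finset α, ↑B ⊆ A ∧ r = ∏ a ∈ B, h a}

/-- `sup p (f⁻¹(μ))`, the supremum of the weights on the fiber over `μ`, in `[0,∞]`. -/
def fiberSup (G : Set V) (p : V → ℝ) (f : V → ℂ) (μ : ℂ) : ℝ≥0∞ :=
  ⨆ a ∈ {a ∈ G | f a = μ}, ENNReal.ofReal (p a)

/-- The factor `|μ| ^ (sup p (f⁻¹(μ)))`, equal to `0` when the exponent is infinite. -/
def minTerm (G : Set V) (p : V → ℝ) (f : V → ℂ) (μ : ℂ) : ℝ :=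
  if fiberSup G p f μ = ⊤ then 0 else ‖μ‖ ^ (fiberSup G p f μ).toReal

/-- `d_G^min(p,z) = sup { ∏_{μ ∈ f(G)} |μ| ^ (sup p (f⁻¹(μ))) : f ∈ O(G,E), f(z) = 0 }`. -/
def dMin (G : Set V) (p : V → ℝ) (z : V) : ℝ :=
  sSup {r : ℝ | ∃ f : V → ℂ, DifferentiableOn ℂ f G ∧ MapsTo f G discE ∧
    f z = 0 ∧ r = infProd (f '' G) (minTerm G p f)}

/-- The unit disc viewed as a domain in `ℂ¹ = (Fin 1 → ℂ)`. -/
def E1 : Set (Fin 1 → ℂ) := {z : Fin 1 → ℂ | ‖z 0‖ < 1}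

/-- Strong analytic-disc connectivity witness. -/
def ConnDisc (G : Set V) (a z : V) : Prop :=
  ∃ μ : ℂ, ‖μ‖ < 1 ∧ ∃ φ : ℂ → V, DifferentiableOn ℂ φ (Metric.ball 0 2) ∧
    Set.MapsTo φ (Metric.closedBall 0 1) G ∧ φ 0 = a ∧ φ μ = z

lemma mem_ball2 (x : ℂ) : x ∈ Metric.ball (0:ℂ) 2 ↔ ‖x‖ < 2 := by
  simp [Metric.mem_ball, Complex.dist_eq]

lemma mem_cball1 (x : ℂ) : x ∈ Metric.closedBall (0:ℂ) 1 ↔ ‖x‖ ≤ 1 := by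
  simp [Metric.mem_closedBall, Complex.dist_eq]

set_option maxHeartbeats 1000000 in
lemma connDisc_step {G : Set V} (hG : IsOpen G) {a z z' : V} {r : ℝ}
    (hr : 0 < r) (hball : Metric.ball z r ⊆ G) (hzz' : dist z' z < r / 4)
    (h : ConnDisc G a z') : ConnDisc G a z := by
  obtain ⟨μ, hμ, φ, hφd, hφm, hφ0, hφμ⟩ := h
  set t : ℝ := ‖μ‖ with ht
  have ht0 : 0 ≤ t := norm_nonneg μ
  have ht1 : t < 1 := hμ
  set u : ℂ := if μ = 0 then 1 else μ / (t : ℂ) with hu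
  have hut : u * (t : ℂ) = μ := by
    by_cases h0 : μ = 0
    · simp [hu, h0, ht]
    · have htne : (t : ℂ) ≠ 0 := by
        simpa [ht, Complex.ofReal_eq_zero] using (norm_ne_zero_iff.mpr h0)
      simp [hu, h0, div_mul_cancel₀ _ htne]
  have huabs : ‖u‖ = 1 := by
    by_cases h0 : μ = 0
    · simp [hu, h0]
    · have htpos : 0 < t := norm_pos_iff.mpr h0
      simp [hu, h0, norm_div, Complex.norm_real, _root_.abs_of_pos htpos, ht,
        div_self (ne_of_gt htpos)]
  have hmul : ∀ w : ℂ, ‖u * w‖ = ‖w‖ := by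
    intro w; rw [norm_mul, huabs, one_mul]
  set φ₁ : ℂ → V := fun w => φ (u * w) with hφ₁
  have hφ₁d : DifferentiableOn ℂ φ₁ (Metric.ball 0 2) := by
    apply hφd.comp ((differentiable_id.const_mul u).differentiableOn)
    intro w hw
    rw [mem_ball2] at hw ⊢
    rw [hmul]; exact hw
  have hφ₁m : Set.MapsTo φ₁ (Metric.closedBall 0 1) G := by
    intro w hw
    apply hφm
    rw [mem_cball1] at hw ⊢
    rw [hmul]; exact hw
  have hφ₁0 : φ₁ 0 = a := by simp [hφ₁, hφ0]
  have hφ₁t : φ₁ (t : ℂ) = z' := by rw [hφ₁]; simp only []; rw [hut, hφμ]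
  -- compact image and safety margin
  set K : Set V := φ₁ '' Metric.closedBall 0 1 with hK
  have hKcomp : IsCompact K :=
    (isCompact_closedBall (0:ℂ) 1).image_of_continuousOn
      (hφ₁d.continuousOn.mono (Metric.closedBall_subset_ball (by norm_num)))
  have hKG : K ⊆ G := hφ₁m.image_subset
  obtain ⟨δ, hδ0, hδ⟩ := hKcomp.exists_thickening_subset_open hG hKG
  -- continuity at t
  have htmem : (t : ℂ) ∈ Metric.ball (0:ℂ) 2 := by
    rw [mem_ball2, Complex.norm_of_nonneg ht0]; linarith
  have hct : ContinuousAt φ₁ (t : ℂ) :=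
    hφ₁d.continuousOn.continuousAt (Metric.isOpen_ball.mem_nhds htmem)
  obtain ⟨η, hη0, hη⟩ := Metric.continuousAt_iff.mp hct (r/8) (by positivity)
  -- parameters
  set ε : ℝ := min (δ / (2*(r+1))) 1 with hε
  have hε0 : 0 < ε := by
    apply lt_min _ one_pos
    positivity
  have hε1 : ε ≤ 1 := min_le_right _ _
  have hεδ : ε * (r + 1) ≤ δ / 2 := by
    have h1 : ε ≤ δ / (2*(r+1)) := min_le_left _ _
    have h2 : (0:ℝ) < r + 1 := by linarith
    calc ε * (r+1) ≤ (δ / (2*(r+1))) * (r+1) :=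
          mul_le_mul_of_nonneg_right h1 (le_of_lt h2)
      _ = δ / 2 := by field_simp
  set η' : ℝ := min η 1 with hη'
  have hη'0 : 0 < η' := lt_min hη0 one_pos
  have hη'1 : η' ≤ 1 := min_le_right _ _
  set ρ₀ : ℝ := Real.sqrt (1 - η'^2/4) with hρ₀
  have hinner : 0 ≤ 1 - η'^2/4 := by
    have h1 : η' * η' ≤ 1 := mul_le_one₀ hη'1 (le_of_lt hη'0) hη'1
    rw [pow_two]
    linarith only [h1]
  have hρ₀0 : 0 ≤ ρ₀ := Real.sqrt_nonneg _
  have hρsq : ρ₀^2 = 1 - η'^2/4 := Real.sq_sqrt hinner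
  have hρ₀1 : ρ₀ < 1 := by
    have h1 : ρ₀^2 < 1^2 := by
      rw [hρsq, one_pow]
      have : 0 < η'^2/4 := by positivity
      linarith only [this]
    exact lt_of_pow_lt_pow_left₀ 2 zero_le_one h1
  obtain ⟨N, hN⟩ := exists_pow_lt_of_lt_one (show (0:ℝ) < ε/2 by positivity) hρ₀1
  set δs : ℝ := min (δ/2) (r/8) with hδs
  have hδs0 : 0 < δs := lt_min (by positivity) (by positivity)
  -- choose s close to 1
  have hcont1 : ContinuousAt (fun s : ℝ => s * ((1+s)/2)^N) 1 := by fun_prop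
  have hval1 : (fun s : ℝ => s * ((1+s)/2)^N) 1 = 1 := by norm_num
  have hev1 : ∀ᶠ s in 𝓝 (1:ℝ), 1/2 < s * ((1+s)/2)^N := by
    have : ∀ᶠ y in 𝓝 ((fun s : ℝ => s * ((1+s)/2)^N) 1), 1/2 < y := by
      rw [hval1]
      exact eventually_gt_nhds (by norm_num)
    exact hcont1.eventually this
  have hcont2 : Tendsto (fun s : ℝ => φ₁ ((t:ℂ) * (s:ℂ))) (𝓝 1)
      (𝓝 (φ₁ ((t:ℂ) * ((1:ℝ):ℂ)))) := by
    have h2 : Tendsto (fun s : ℝ => ((t:ℂ) * (s:ℂ))) (𝓝 1) (𝓝 ((t:ℂ) * ((1:ℝ):ℂ))) := by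
      exact (Continuous.tendsto (by fun_prop) 1)
    have h1 : ContinuousAt φ₁ ((t:ℂ) * ((1:ℝ):ℂ)) := by
      rw [show (t:ℂ) * ((1:ℝ):ℂ) = (t:ℂ) by norm_num]
      exact hct
    exact Filter.Tendsto.comp (g := φ₁) (f := fun s : ℝ => ((t:ℂ) * (s:ℂ))) h1 h2
  have hev2 : ∀ᶠ s : ℝ in 𝓝 (1:ℝ), dist (φ₁ ((t:ℂ) * (s:ℂ))) z' < δs/4 := by
    have hball' : ∀ᶠ y in 𝓝 (φ₁ ((t:ℂ) * ((1:ℝ):ℂ))), dist y z' < δs/4 := by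
      rw [show (t:ℂ) * ((1:ℝ):ℂ) = (t:ℂ) by norm_num, hφ₁t]
      have : Metric.ball z' (δs/4) ∈ 𝓝 z' := Metric.ball_mem_nhds _ (by positivity)
      filter_upwards [this] with y hy using Metric.mem_ball.mp hy
    exact hcont2.eventually hball'
  have hev3 : ∀ᶠ s in 𝓝 (1:ℝ), 1/2 < s := eventually_gt_nhds (by norm_num)
  have hlt : ∀ᶠ s in 𝓝[<] (1:ℝ), s < 1 := eventually_mem_nhdsWithin
  obtain ⟨s, hs⟩ :=
    ((((hev3.and hev1).and hev2).filter_mono nhdsWithin_le_nhds).and hlt).exists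
  obtain ⟨⟨⟨hs_half, hsc⟩, hsd⟩, hs1⟩ := hs
  have hs0 : 0 < s := by linarith
  -- constants
  set qs : ℝ := ((1+s)/2)^N with hqs
  have hqs0 : 0 < qs := by positivity
  set c : ℝ := 1 / (s * qs) with hc
  have hc0 : 0 < c := by positivity
  have hc2 : c ≤ 2 := by
    rw [hc, div_le_iff₀ (by positivity)]
    linarith only [hsc]
  have hcs : c * (s * qs) = 1 := by
    rw [hc, one_div, inv_mul_cancel₀ (ne_of_gt (by positivity))]
  set β : ℂ → ℂ := fun w => (c:ℂ) * w * ((1+w)/2)^N with hβ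
  set Φ : ℂ → V := fun w => φ₁ ((t:ℂ)*w) + (β w) • (z - z') with hΦ
  have hβabs : ∀ w : ℂ, ‖β w‖ = c * ‖w‖ * (‖(1+w)/2‖)^N := by
    intro w
    rw [hβ]; simp only []
    rw [norm_mul, norm_mul, norm_pow, Complex.norm_of_nonneg hc0.le]
  have hzz'' : ‖z - z'‖ < r / 4 := by
    rw [show z - z' = -(z' - z) from (neg_sub z' z).symm, norm_neg, ← dist_eq_norm]
    exact hzz'
  -- safety
  have hsafe : ∀ w ∈ Metric.closedBall (0:ℂ) 1, Metric.ball (Φ w) δs ⊆ G := by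
    intro w hw
    have hw1 : ‖w‖ ≤ 1 := (mem_cball1 w).mp hw
    set Q : ℝ := ‖(1+w)/2‖ with hQ
    have hQ0 : 0 ≤ Q := norm_nonneg _
    have hQ1 : Q ≤ 1 := by
      rw [hQ, norm_div, Complex.norm_two]
      rw [div_le_one (by norm_num)]
      calc ‖1 + w‖ ≤ ‖(1:ℂ)‖ + ‖w‖ := norm_add_le _ _
        _ ≤ 2 := by rw [norm_one]; linarith
    have htwK : φ₁ ((t:ℂ)*w) ∈ K := by
      apply Set.mem_image_of_mem
      rw [mem_cball1, norm_mul, Complex.norm_of_nonneg ht0]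
      exact mul_le_one₀ (le_of_lt ht1) (norm_nonneg w) hw1
    by_cases hcase : Q^N ≤ ε/2
    · -- region A : small perturbation, stay near K
      have hβsmall : ‖β w‖ ≤ ε := by
        rw [hβabs]
        calc c * ‖w‖ * Q^N ≤ 2 * 1 * (ε/2) := by
              apply mul_le_mul _ hcase (by positivity) (by norm_num)
              exact mul_le_mul hc2 hw1 (norm_nonneg w) (by norm_num)
          _ = ε := by ring
      have hdist1 : dist (Φ w) (φ₁ ((t:ℂ)*w)) ≤ δ/2 := by
        rw [hΦ]; simp only []
        rw [dist_eq_norm, add_sub_cancel_left, norm_smul]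
        calc ‖β w‖ * ‖z - z'‖ ≤ ε * (r+1) := by
              apply mul_le_mul hβsmall (by linarith) (norm_nonneg _) (le_of_lt hε0)
          _ ≤ δ/2 := hεδ
      intro y hy
      apply hδ
      rw [Metric.mem_thickening_iff]
      refine ⟨φ₁ ((t:ℂ)*w), htwK, ?_⟩
      have hyd : dist y (Φ w) < δs := Metric.mem_ball.mp hy
      calc dist y (φ₁ ((t:ℂ)*w)) ≤ dist y (Φ w) + dist (Φ w) (φ₁ ((t:ℂ)*w)) := dist_triangle _ _ _
        _ < δs + δ/2 := by linarith only [hyd, hdist1]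
        _ ≤ δ/2 + δ/2 := by
              have hd1 : δs ≤ δ/2 := by rw [hδs]; exact min_le_left _ _
              linarith only [hd1]
        _ = δ := by ring
    · -- region B : near w = 1
      push_neg at hcase
      have hQρ : ρ₀ < Q := by
        by_contra hcon
        push_neg at hcon
        have : Q^N ≤ ρ₀^N := pow_le_pow_left₀ hQ0 hcon N
        linarith
      have hpar : ‖1-w‖^2 + ‖1+w‖^2 = 2 + 2 * ‖w‖^2 := by
        rw [Complex.sq_norm, Complex.sq_norm, Complex.sq_norm]
        simp [Complex.normSq_apply, Complex.add_re, Complex.add_im, Complex.sub_re,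
          Complex.sub_im]
        ring
      have hQab : ‖1+w‖ = 2*Q := by
        rw [hQ, norm_div, Complex.norm_two]; ring
      have h1wsq : ‖1-w‖^2 < η'^2 := by
        have h1 : ‖1-w‖^2 = 2 + 2*‖w‖^2 - 4*Q^2 := by
          rw [← hpar, hQab]; ring
        have h2 : ‖w‖^2 ≤ 1 := by
          rw [pow_two]
          exact mul_le_one₀ hw1 (norm_nonneg w) hw1
        have h3 : ρ₀^2 < Q^2 := by
          rw [pow_two, pow_two]
          exact mul_self_lt_mul_self hρ₀0 hQρ
        rw [h1]
        linarith only [h2, h3, hρsq]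
      have h1w : ‖1-w‖ < η' :=
        lt_of_pow_lt_pow_left₀ 2 (le_of_lt hη'0) h1wsq
      have hdtw : dist ((t:ℂ)*w) (t:ℂ) < η := by
        rw [Complex.dist_eq, show (t:ℂ)*w - t = -((t:ℂ) * (1 - w)) by ring, norm_neg,
          norm_mul, Complex.norm_of_nonneg ht0]
        calc t * ‖1-w‖ ≤ 1 * ‖1-w‖ := by
              apply mul_le_mul_of_nonneg_right (le_of_lt ht1) (norm_nonneg _)
          _ = ‖1-w‖ := one_mul _
          _ < η' := h1w
          _ ≤ η := min_le_left _ _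
      have hnear : dist (φ₁ ((t:ℂ)*w)) z' < r/8 := by
        have := hη hdtw
        rwa [hφ₁t] at this
      have hβ2 : ‖β w‖ ≤ 2 := by
        rw [hβabs]
        have hQN : Q^N ≤ 1 := pow_le_one₀ hQ0 hQ1
        calc c * ‖w‖ * Q^N ≤ 2 * 1 * 1 := by
              apply mul_le_mul _ hQN (by positivity) (by norm_num)
              exact mul_le_mul hc2 hw1 (norm_nonneg w) (by norm_num)
          _ = 2 := by ring
      have hΦz : dist (Φ w) z < 7/8*r := by
        have key : Φ w - z = (φ₁ ((t:ℂ)*w) - z') + ((β w - 1)) • (z - z') := by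
          rw [hΦ]; simp only []
          rw [sub_smul, one_smul]; abel
        rw [dist_eq_norm, key]
        calc ‖(φ₁ ((t:ℂ)*w) - z') + ((β w - 1)) • (z - z')‖
            ≤ ‖φ₁ ((t:ℂ)*w) - z'‖ + ‖(β w - 1) • (z - z')‖ := norm_add_le _ _
          _ = ‖φ₁ ((t:ℂ)*w) - z'‖ + ‖β w - 1‖ * ‖z - z'‖ := by
              rw [norm_smul]
          _ < r/8 + 3 * (r/4) := by
              have h1 : ‖φ₁ ((t:ℂ)*w) - z'‖ < r/8 := by rw [← dist_eq_norm]; exact hnear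
              have h2 : ‖β w - 1‖ ≤ 3 := by
                calc ‖β w - 1‖ = ‖β w + (-1)‖ := by
                      rw [sub_eq_add_neg]
                  _ ≤ ‖β w‖ + ‖(-1:ℂ)‖ := norm_add_le _ _
                  _ ≤ 3 := by rw [norm_neg, norm_one]; linarith only [hβ2]
              have h3 : ‖β w - 1‖ * ‖z - z'‖ ≤ 3 * (r/4) := by
                apply mul_le_mul h2 (le_of_lt hzz'') (norm_nonneg _) (by norm_num)
              linarith only [h1, h3]
          _ = 7/8*r := by ring
      intro y hy
      apply hball
      rw [Metric.mem_ball] at hy ⊢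
      calc dist y z ≤ dist y (Φ w) + dist (Φ w) z := dist_triangle _ _ _
        _ < δs + 7/8*r := by linarith only [hy, hΦz]
        _ ≤ r/8 + 7/8*r := by
              have hd2 : δs ≤ r/8 := by rw [hδs]; exact min_le_right _ _
              linarith only [hd2]
        _ = r := by ring
  -- final perturbation
  have hΦs : Φ (s:ℂ) = φ₁ ((t:ℂ)*(s:ℂ)) + (z - z') := by
    rw [hΦ]; simp only []
    congr 1
    have hβs : β (s:ℂ) = 1 := by
      rw [hβ]; simp only []
      have : ((1 + (s:ℂ))/2)^N = ((qs : ℝ) : ℂ) := by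
        rw [hqs]; push_cast; ring
      rw [this]
      rw [show (c:ℂ) * (s:ℂ) * ((qs:ℝ):ℂ) = (((c * (s * qs) : ℝ)):ℂ) by push_cast; ring]
      rw [hcs]; norm_num
    rw [hβs, one_smul]
  set e : V := z - Φ (s:ℂ) with he
  have hens : ‖e‖ < δs/4 := by
    rw [he, hΦs, show z - (φ₁ ((t:ℂ)*(s:ℂ)) + (z - z')) = z' - φ₁ ((t:ℂ)*(s:ℂ)) by abel,
      ← dist_eq_norm, dist_comm]
    exact hsd
  set Φ' : ℂ → V := fun w => Φ w + (w / (s:ℂ)) • e with hΦ'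
  refine ⟨(s:ℂ), ?_, Φ', ?_, ?_, ?_, ?_⟩
  · rw [Complex.norm_of_nonneg hs0.le]; exact hs1
  · -- differentiability
    rw [hΦ']
    apply DifferentiableOn.add
    · rw [hΦ]
      apply DifferentiableOn.add
      · apply hφ₁d.comp ((differentiable_id.const_mul ((t:ℂ))).differentiableOn)
        intro w hw
        rw [mem_ball2] at hw ⊢
        rw [norm_mul, Complex.norm_of_nonneg ht0]
        calc t * ‖w‖ ≤ 1 * ‖w‖ :=
              mul_le_mul_of_nonneg_right (le_of_lt ht1) (norm_nonneg w)
          _ < 2 := by rw [one_mul]; exact hw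
      · apply Differentiable.differentiableOn
        apply Differentiable.smul_const
        rw [hβ]
        fun_prop
    · apply Differentiable.differentiableOn
      apply Differentiable.smul_const
      fun_prop
  · -- maps to
    intro w hw
    have hsne : (s:ℂ) ≠ 0 := by
      simp [Complex.ofReal_eq_zero]; linarith
    apply hsafe w hw
    rw [Metric.mem_ball, hΦ']; simp only []
    rw [dist_eq_norm, add_sub_cancel_left, norm_smul, norm_div,
      Complex.norm_of_nonneg hs0.le]
    have hw1 : ‖w‖ ≤ 1 := (mem_cball1 w).mp hw
    calc ‖w‖ / s * ‖e‖ ≤ (1/s) * (δs/4) := by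
          apply mul_le_mul _ (le_of_lt hens) (norm_nonneg _) (by positivity)
          exact div_le_div_of_nonneg_right hw1 hs0.le
      _ ≤ 2 * (δs/4) := by
          apply mul_le_mul_of_nonneg_right _ (by positivity)
          rw [div_le_iff₀ hs0]; linarith
      _ < δs := by linarith
  · -- Φ' 0 = a
    rw [hΦ']; simp only []
    rw [hΦ]; simp only []
    have hβ0 : β 0 = 0 := by rw [hβ]; simp
    rw [hβ0, zero_smul, add_zero, mul_zero, hφ₁0]
    simp
  · -- Φ' s = z
    rw [hΦ']; simp only []
    have hsne : (s:ℂ) ≠ 0 := by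
      simp [Complex.ofReal_eq_zero]; linarith
    rw [div_self hsne, one_smul, he]
    abel

lemma connDisc_refl {G : Set V} {a : V} (ha : a ∈ G) : ConnDisc G a a :=
  ⟨0, by simp, fun _ => a, differentiableOn_const a, fun w _ => ha, rfl, rfl⟩

lemma connDisc_all {G : Set V} (hG : IsDom G) {a z : V} (ha : a ∈ G) (hz : z ∈ G) :
    ConnDisc G a z := by
  obtain ⟨hGo, hGc⟩ := hG
  by_contra hcon
  set U : Set V := {x | x ∈ G ∧ ConnDisc G a x} with hU
  set W : Set V := {x | x ∈ G ∧ ¬ ConnDisc G a x} with hW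
  have hUopen : IsOpen U := by
    rw [Metric.isOpen_iff]
    rintro x ⟨hxG, hxC⟩
    obtain ⟨r, hr0, hrb⟩ := Metric.isOpen_iff.mp hGo x hxG
    refine ⟨r/8, by positivity, ?_⟩
    intro y hy
    have hyx : dist y x < r/8 := Metric.mem_ball.mp hy
    have hyG : y ∈ G := hrb (Metric.mem_ball.mpr (by linarith only [hyx, hr0]))
    refine ⟨hyG, ?_⟩
    apply connDisc_step hGo (show (0:ℝ) < r/2 by positivity) ?_ ?_ hxC
    · intro v hv
      apply hrb
      rw [Metric.mem_ball] at hv ⊢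
      calc dist v x ≤ dist v y + dist y x := dist_triangle _ _ _
        _ < r/2 + r/8 := by linarith only [hv, hyx]
        _ < r := by linarith only [hr0]
    · rw [dist_comm]
      calc dist y x < r/8 := hyx
        _ ≤ r/2/4 := by linarith only [hr0]
  have hWopen : IsOpen W := by
    rw [Metric.isOpen_iff]
    rintro x ⟨hxG, hxC⟩
    obtain ⟨r, hr0, hrb⟩ := Metric.isOpen_iff.mp hGo x hxG
    refine ⟨r/8, by positivity, ?_⟩
    intro y hy
    have hyx : dist y x < r/8 := Metric.mem_ball.mp hy
    have hyG : y ∈ G := hrb (Metric.mem_ball.mpr (by linarith only [hyx, hr0]))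
    refine ⟨hyG, fun hyC => hxC ?_⟩
    apply connDisc_step hGo hr0 hrb ?_ hyC
    calc dist y x < r/8 := hyx
      _ ≤ r/4 := by linarith only [hr0]
  have hcover : G ⊆ U ∪ W := by
    intro x hx
    by_cases hC : ConnDisc G a x
    · exact Or.inl ⟨hx, hC⟩
    · exact Or.inr ⟨hx, hC⟩
  have hUne : (G ∩ U).Nonempty := ⟨a, ha, ha, connDisc_refl ha⟩
  have hWne : (G ∩ W).Nonempty := ⟨z, hz, hz, hcon⟩
  obtain ⟨x, -, ⟨-, hxC⟩, ⟨-, hxNC⟩⟩ :=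
    hGc.isPreconnected U W hUopen hWopen hcover hUne hWne
  exact hxNC hxC



lemma isDom_E1 : IsDom E1 := by
  constructor
  · exact isOpen_lt (continuous_norm.comp (continuous_apply 0)) continuous_const
  · refine ⟨⟨0, by simp [E1]⟩, ?_⟩
    have h : E1 = ((LinearMap.proj 0 : (Fin 1 → ℂ) →ₗ[ℂ] ℂ).restrictScalars ℝ) ⁻¹'
        (Metric.ball 0 1) := by
      ext w; simp [E1, Metric.mem_ball, Complex.dist_eq]
    rw [h]
    exact ((convex_ball (0:ℂ) 1).linear_preimage _).isPreconnected

/-- a family satisfying (H) and (E⁺) is dominated by `d^max`. -/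
theorem stmt_0
    (d : (n : ℕ) → Set (Fin n → ℂ) → ((Fin n → ℂ) → ℝ) → (Fin n → ℂ) → ℝ)
    (hnonneg : ∀ (n : ℕ) (G : Set (Fin n → ℂ)) (p : (Fin n → ℂ) → ℝ) (z : Fin n → ℂ),
      0 ≤ d n G p z)
    (hH : ∀ (n m : ℕ) (G : Set (Fin n → ℂ)) (D : Set (Fin m → ℂ)), IsDom G → IsDom D →
      ∀ F : (Fin n → ℂ) → (Fin m → ℂ), DifferentiableOn ℂ F G → MapsTo F G D →
      ∀ q : (Fin m → ℂ) → ℝ, (∀ b, 0 ≤ q b) →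
      ∀ z ∈ G, d m D q (F z) ≤ d n G (q ∘ F) z)
    (hEplus : ∀ p : (Fin 1 → ℂ) → ℝ, (∀ a, 0 ≤ p a) → ∀ lam ∈ E1,
      d 1 E1 p lam ≤ sInf {r : ℝ | ∃ μ ∈ E1, r = mE (μ 0) (lam 0) ^ p μ})
    (n : ℕ) (G : Set (Fin n → ℂ)) (hG : IsDom G)
    (p : (Fin n → ℂ) → ℝ) (hp : ∀ a, 0 ≤ p a) (z : Fin n → ℂ) (hz : z ∈ G) :
    d n G p z ≤ dMax G p z := by
  have hE1 : IsDom E1 := isDom_E1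
  refine le_csInf ⟨lemp G z z ^ p z, z, hz, rfl⟩ ?_
  rintro b ⟨a, ha, rfl⟩
  set S : Set ℝ := {r : ℝ | ∃ μ ∈ discE, ∃ φ : ℂ → (Fin n → ℂ), DifferentiableOn ℂ φ discE ∧
    MapsTo φ discE G ∧ φ 0 = a ∧ φ μ = z ∧ r = ‖μ‖} with hSdef
  have hSlemp : lemp G a z = sInf S := rfl
  have hdiscE_ball : discE ⊆ Metric.ball (0:ℂ) 2 := by
    intro w hw
    rw [mem_ball2]
    exact lt_trans hw one_lt_two
  have hdiscE_cball : discE ⊆ Metric.closedBall (0:ℂ) 1 := by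
    intro w hw
    rw [mem_cball1]
    exact le_of_lt hw
  have hSne : S.Nonempty := by
    obtain ⟨μ, hμ, φ, hφd, hφm, hφ0, hφμ⟩ := connDisc_all hG ha hz
    exact ⟨‖μ‖, μ, hμ, φ, hφd.mono hdiscE_ball, hφm.mono_left hdiscE_cball,
      hφ0, hφμ, rfl⟩
  have hSnn : ∀ r ∈ S, 0 ≤ r := by
    rintro r ⟨μ, -, -, -, -, -, -, rfl⟩
    exact norm_nonneg μ
  have key : ∀ r ∈ S, d n G p z ≤ r ^ p a := by
    rintro r ⟨μ, hμE, φ, hφd, hφm, hφ0, hφμ, rfl⟩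
    set F : (Fin 1 → ℂ) → (Fin n → ℂ) := fun v => φ (v 0) with hF
    have hFd : DifferentiableOn ℂ F E1 := by
      apply hφd.comp
        ((ContinuousLinearMap.proj 0 : (Fin 1 → ℂ) →L[ℂ] ℂ).differentiable.differentiableOn)
      intro v hv
      exact hv
    have hFm : MapsTo F E1 G := fun v hv => hφm hv
    set lam : Fin 1 → ℂ := fun _ => μ with hlam
    have hlamE : lam ∈ E1 := hμE
    have h1 := hH 1 n E1 G hE1 hG F hFd hFm p hp lam hlamE
    have hFlam : F lam = z := hφμ
    have h2 := hEplus (p ∘ F) (fun v => hp _) lam hlamE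
    have h3 : sInf {x : ℝ | ∃ ν ∈ E1, x = mE (ν 0) (lam 0) ^ (p ∘ F) ν} ≤
        ‖μ‖ ^ p a := by
      have hmem : ‖μ‖ ^ p a ∈
          {x : ℝ | ∃ ν ∈ E1, x = mE (ν 0) (lam 0) ^ (p ∘ F) ν} := by
        refine ⟨(fun _ => 0 : Fin 1 → ℂ), by simp [E1], ?_⟩
        have hm : mE ((fun _ => (0:ℂ)) 0) (lam 0) = ‖μ‖ := by simp [mE, hlam]
        have hF0 : F (fun _ => 0) = a := hφ0
        rw [hm, Function.comp_apply, hF0]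
      refine csInf_le ⟨0, ?_⟩ hmem
      rintro x ⟨ν, -, rfl⟩
      exact Real.rpow_nonneg (norm_nonneg _) _
    calc d n G p z = d n G p (F lam) := by rw [hFlam]
      _ ≤ d 1 E1 (p ∘ F) lam := h1
      _ ≤ _ := h2
      _ ≤ ‖μ‖ ^ p a := h3
  rcases (hp a).eq_or_lt with hpa | hpa
  · obtain ⟨r, hr⟩ := hSne
    have hdr := key r hr
    rw [← hpa, Real.rpow_zero] at hdr ⊢
    exact hdr
  · have hd0 := hnonneg n G p z
    have h1 : d n G p z ^ (1 / p a) ≤ sInf S := by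
      apply le_csInf hSne
      intro r hr
      have hr0 := hSnn r hr
      have hdr := key r hr
      calc d n G p z ^ (1/p a) ≤ (r ^ p a) ^ (1/p a) :=
            Real.rpow_le_rpow hd0 hdr (by positivity)
        _ = r ^ (p a * (1/p a)) := (Real.rpow_mul hr0 _ _).symm
        _ = r := by rw [mul_one_div_cancel hpa.ne', Real.rpow_one]
    have h2 : d n G p z = (d n G p z ^ (1/p a)) ^ p a := by
      rw [← Real.rpow_mul hd0, one_div_mul_cancel hpa.ne', Real.rpow_one]
    rw [h2, hSlemp]
    exact Real.rpow_le_rpow (Real.rpow_nonneg hd0 _) h1 (le_of_lt hpa)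
end
end

section
/- The family (d_G^max)_G satisfies the three axioms: (E) ∏_{a∈E}[m_E(a,z)]^{p(a)} ≤ d_E^max(p,z) ≤ inf{[m_E(a,z)]^{p(a)} : a ∈ E} for all p : E → ℝ₊ and z ∈ E; (H) for all domains G ⊆ ℂⁿ, D ⊆ ℂᵐ, every holomorphic map F : G → D and every q : D → ℝ₊, d_D^max(q, F(z)) ≤ d_G^max(q ∘ F, z) for all z ∈ G; (M) for p, q : G → ℝ₊ with p ≤ q pointwise, d_G^max(q,·) ≤ d_G^max(p,·) on G. -/
open Complex Set Filter Asymptotics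
open scoped ENNReal

noncomputable section

variable {V W : Type*} [NormedAddCommGroup V] [NormedSpace ℂ V]
  [NormedAddCommGroup W] [NormedSpace ℂ W]

namespace DmaxAux


lemma discE_eq_ball : discE = Metric.ball (0 : ℂ) 1 := by
  ext z; simp [discE, Metric.mem_ball, Complex.dist_eq]

lemma key_ineq {a z : ℂ} (ha : ‖a‖ < 1) (hz : ‖z‖ < 1) :
    ‖z - a‖ < ‖1 - (starRingEnd ℂ) a * z‖ := by
  have hdiff : Complex.normSq (1 - (starRingEnd ℂ) a * z) - Complex.normSq (z - a)
      = (1 - Complex.normSq a) * (1 - Complex.normSq z) := by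
    simp only [Complex.normSq_apply, Complex.sub_re, Complex.sub_im, Complex.mul_re,
      Complex.mul_im, Complex.conj_re, Complex.conj_im, Complex.one_re, Complex.one_im]
    ring
  have ha' : Complex.normSq a < 1 := by
    rw [← Complex.sq_norm]; nlinarith [norm_nonneg a]
  have hz' : Complex.normSq z < 1 := by
    rw [← Complex.sq_norm]; nlinarith [norm_nonneg z]
  have hpos : Complex.normSq (z - a) < Complex.normSq (1 - (starRingEnd ℂ) a * z) := by
    nlinarith
  rw [Complex.norm_def, Complex.norm_def]
  exact Real.sqrt_lt_sqrt (Complex.normSq_nonneg _) hpos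

/-- The Möbius map. -/
def moeb (a w : ℂ) : ℂ := (w - a) / (1 - (starRingEnd ℂ) a * w)

lemma mE_eq_moeb (a z : ℂ) : mE a z = ‖moeb a z‖ := rfl

lemma moeb_denom_ne {a w : ℂ} (ha : ‖a‖ < 1) (hw : ‖w‖ < 1) :
    (1 - (starRingEnd ℂ) a * w) ≠ 0 := by
  intro h
  have h0 : ‖w - a‖ < 0 := by simpa [h] using key_ineq ha hw
  exact absurd h0 (not_lt.2 (norm_nonneg _))

lemma moeb_abs_lt {a w : ℂ} (ha : ‖a‖ < 1) (hw : ‖w‖ < 1) :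
    ‖moeb a w‖ < 1 := by
  have hd := moeb_denom_ne ha hw
  have hdpos : 0 < ‖1 - (starRingEnd ℂ) a * w‖ := by
    exact norm_pos_iff.mpr hd
  rw [moeb, norm_div, div_lt_one hdpos]
  exact key_ineq ha hw

lemma moeb_mem {a w : ℂ} (ha : ‖a‖ < 1) (hw : w ∈ discE) :
    moeb a w ∈ discE := moeb_abs_lt ha hw

lemma moeb_diffOn {a : ℂ} (ha : ‖a‖ < 1) :
    DifferentiableOn ℂ (moeb a) discE := by
  intro w hw
  exact ((differentiableAt_id.sub_const a).div
    ((differentiableAt_const 1).sub ((differentiableAt_const _).mul differentiableAt_id))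
    (moeb_denom_ne ha hw)).differentiableWithinAt

lemma moeb_self (a : ℂ) : moeb a a = 0 := by simp [moeb]

lemma moeb_neg_zero (a : ℂ) : moeb (-a) 0 = a := by simp [moeb]

lemma moeb_inv {a z : ℂ} (ha : ‖a‖ < 1) (hz : ‖z‖ < 1) :
    moeb (-a) (moeb a z) = z := by
  have h1 : (1 - (starRingEnd ℂ) a * z) ≠ 0 := moeb_denom_ne ha hz
  have h2 : (1 - (starRingEnd ℂ) (-a) * moeb a z) ≠ 0 :=
    moeb_denom_ne (by simpa using ha) (moeb_abs_lt ha hz)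
  have h3 : (1 - (starRingEnd ℂ) a * a) ≠ 0 := moeb_denom_ne ha ha
  rw [moeb, div_eq_iff h2]
  rw [moeb] at h2 ⊢
  rw [map_neg] at h2 ⊢
  field_simp at h2 ⊢
  ring


section LempLemmas

variable {V W : Type*} [NormedAddCommGroup V] [NormedSpace ℂ V]
  [NormedAddCommGroup W] [NormedSpace ℂ W]

/-- The defining set of the Lempert function. -/
def lempSet (G : Set V) (a z : V) : Set ℝ :=
  {r : ℝ | ∃ μ ∈ discE, ∃ φ : ℂ → V, DifferentiableOn ℂ φ discE ∧
    MapsTo φ discE G ∧ φ 0 = a ∧ φ μ = z ∧ r = ‖μ‖}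

lemma lemp_eq (G : Set V) (a z : V) : lemp G a z = sInf (lempSet G a z) := rfl

lemma lempSet_nonneg {G : Set V} {a z : V} : ∀ r ∈ lempSet G a z, (0:ℝ) ≤ r := by
  rintro r ⟨μ, hμ, φ, hd, hm, h0, hz, rfl⟩
  exact norm_nonneg μ

lemma lempSet_bdd {G : Set V} {a z : V} : BddBelow (lempSet G a z) :=
  ⟨0, fun r hr => lempSet_nonneg r hr⟩

lemma lemp_nonneg (G : Set V) (a z : V) : 0 ≤ lemp G a z :=
  Real.sInf_nonneg lempSet_nonneg

lemma lemp_le {G : Set V} {a z : V} {r : ℝ} (hr : r ∈ lempSet G a z) :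
    lemp G a z ≤ r := csInf_le lempSet_bdd hr

lemma lemp_le_one (G : Set V) (a z : V) : lemp G a z ≤ 1 := by
  rcases Set.eq_empty_or_nonempty (lempSet G a z) with h | h
  · rw [lemp_eq, h, Real.sInf_empty]; exact zero_le_one
  · obtain ⟨r, hr⟩ := h
    refine le_trans (lemp_le hr) ?_
    obtain ⟨μ, hμ, -, -, -, -, -, rfl⟩ := hr
    exact le_of_lt hμ

lemma lemp_mono {G : Set V} {D : Set W} {F : V → W} {a z : V}
    (hF : DifferentiableOn ℂ F G) (hFm : MapsTo F G D)
    (hne : (lempSet G a z).Nonempty) :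
    lemp D (F a) (F z) ≤ lemp G a z := by
  refine le_csInf hne ?_
  rintro r ⟨μ, hμ, φ, hd, hm, h0, hz, rfl⟩
  refine lemp_le ⟨μ, hμ, F ∘ φ, hF.comp hd hm, hFm.comp hm, ?_, ?_, rfl⟩
  · simp [Function.comp, h0]
  · simp [Function.comp, hz]

lemma dMax_bdd (G : Set V) (p : V → ℝ) (z : V) :
    BddBelow {r : ℝ | ∃ a ∈ G, r = lemp G a z ^ p a} := by
  refine ⟨0, ?_⟩
  rintro r ⟨a, ha, rfl⟩
  exact Real.rpow_nonneg (lemp_nonneg G a z) _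

lemma dMax_le {G : Set V} {p : V → ℝ} {z a : V} (ha : a ∈ G) :
    dMax G p z ≤ lemp G a z ^ p a :=
  csInf_le (dMax_bdd G p z) ⟨a, ha, rfl⟩

end LempLemmas

section DiscLemmas

/-- Schwarz--Pick: any analytic disc in `E` through `a` and `z` satisfies `mE a z ≤ |μ|`. -/
lemma schwarz_pick {a z μ : ℂ} (ha : a ∈ discE) (hz : z ∈ discE) (hμ : μ ∈ discE)
    {φ : ℂ → ℂ} (hd : DifferentiableOn ℂ φ discE) (hm : MapsTo φ discE discE)
    (h0 : φ 0 = a) (hμz : φ μ = z) : mE a z ≤ ‖μ‖ := by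
  have hga : ‖a‖ < 1 := ha
  set g : ℂ → ℂ := fun w => moeb a (φ w) with hg
  have hgd : DifferentiableOn ℂ g discE := (moeb_diffOn hga).comp hd hm
  have hgm : MapsTo g discE discE := fun w hw => moeb_mem hga (hm hw)
  have hg0 : g 0 = 0 := by rw [hg]; simp only [h0]; exact moeb_self a
  have := Complex.norm_le_norm_of_mapsTo_ball
    (R := 1) (f := g) (by rwa [← discE_eq_ball])
    ((by rwa [← discE_eq_ball] : MapsTo g (Metric.ball 0 1) (Metric.ball 0 1)).mono_right
      Metric.ball_subset_closedBall) hg0 hμ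
  calc mE a z = ‖g μ‖ := by rw [hg]; simp only [hμz]; rfl
    _ ≤ ‖μ‖ := this

lemma lemp_discE_le {a z : ℂ} (ha : a ∈ discE) (hz : z ∈ discE) :
    ‖moeb a z‖ ∈ lempSet discE a z := by
  have ha' : ‖a‖ < 1 := ha
  have hz' : ‖z‖ < 1 := hz
  have hna : ‖-a‖ < 1 := by simpa using ha'
  refine ⟨moeb a z, moeb_mem ha' hz, moeb (-a), moeb_diffOn hna,
    fun w hw => moeb_mem hna hw, moeb_neg_zero a, moeb_inv ha' hz', rfl⟩

lemma lemp_le_mE {a z : ℂ} (ha : a ∈ discE) (hz : z ∈ discE) :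
    lemp discE a z ≤ mE a z :=
  lemp_le (lemp_discE_le ha hz)

lemma mE_le_lemp {a z : ℂ} (ha : a ∈ discE) (hz : z ∈ discE) :
    mE a z ≤ lemp discE a z := by
  refine le_csInf ⟨_, lemp_discE_le ha hz⟩ ?_
  rintro r ⟨μ, hμ, φ, hd, hm, h0, hμz, rfl⟩
  exact schwarz_pick ha hz hμ hd hm h0 hμz

end DiscLemmas

section SinBounds

lemma sin_im_bound (w : ℂ) : ‖Complex.sin w‖ ≤ Real.exp |w.im| := by
  have hsin : Complex.sin w
      = (Complex.exp (-w * Complex.I) - Complex.exp (w * Complex.I)) * Complex.I / 2 := rfl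
  rw [hsin, norm_div, norm_mul, Complex.norm_I, mul_one, Complex.norm_two]
  have h1 : ‖Complex.exp (-w * Complex.I)‖ ≤ Real.exp |w.im| := by
    rw [Complex.norm_exp]
    have hre : (-w * Complex.I).re = w.im := by simp
    rw [hre]
    exact Real.exp_le_exp.mpr (le_abs_self _)
  have h2 : ‖Complex.exp (w * Complex.I)‖ ≤ Real.exp |w.im| := by
    rw [Complex.norm_exp]
    have hre : (w * Complex.I).re = -w.im := by simp
    rw [hre]
    exact Real.exp_le_exp.mpr (neg_le_abs _)
  have tri : ‖Complex.exp (-w * Complex.I) - Complex.exp (w * Complex.I)‖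
      ≤ ‖Complex.exp (-w * Complex.I)‖ + ‖Complex.exp (w * Complex.I)‖ := by
    simpa using norm_sub_le (Complex.exp (-w * Complex.I)) (Complex.exp (w * Complex.I))
  linarith

lemma sin_small {w : ℂ} (hw : ‖w‖ ≤ 1) :
    ‖Complex.sin w‖ ≤ 2 * ‖w‖ := by
  have hsin : Complex.sin w
      = (Complex.exp (-w * Complex.I) - Complex.exp (w * Complex.I)) * Complex.I / 2 := rfl
  rw [hsin, norm_div, norm_mul, Complex.norm_I, mul_one, Complex.norm_two]
  have hb1 : ‖-w * Complex.I‖ ≤ 1 := by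
    rw [norm_mul, Complex.norm_I, mul_one, norm_neg]; exact hw
  have hb2 : ‖w * Complex.I‖ ≤ 1 := by
    rw [norm_mul, Complex.norm_I, mul_one]; exact hw
  have e1 := Complex.norm_exp_sub_one_le hb1
  have e2 := Complex.norm_exp_sub_one_le hb2
  rw [norm_mul, Complex.norm_I, mul_one, norm_neg] at e1
  rw [norm_mul, Complex.norm_I, mul_one] at e2
  have hsplit : Complex.exp (-w * Complex.I) - Complex.exp (w * Complex.I)
      = (Complex.exp (-w * Complex.I) - 1) - (Complex.exp (w * Complex.I) - 1) := by ring
  have tri : ‖(Complex.exp (-w * Complex.I) - 1) - (Complex.exp (w * Complex.I) - 1)‖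
      ≤ ‖Complex.exp (-w * Complex.I) - 1‖
        + ‖Complex.exp (w * Complex.I) - 1‖ := by
    simpa using norm_sub_le (Complex.exp (-w * Complex.I) - 1) (Complex.exp (w * Complex.I) - 1)
  rw [hsplit]
  linarith

lemma cos_near {t y : ℝ} (hy : |y| ≤ 2 / Real.pi) :
    ‖Complex.cos (↑Real.pi * (↑t + ↑y * Complex.I)) - Complex.cos (↑Real.pi * ↑t)‖
      ≤ 2 * Real.exp 1 * (Real.pi * |y|) := by
  have hπ := Real.pi_pos
  rw [Complex.cos_sub_cos]
  have hA : ((↑Real.pi * (↑t + ↑y * Complex.I) + ↑Real.pi * ↑t) / 2 : ℂ)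
      = ↑(Real.pi * t) + ↑(Real.pi * y / 2) * Complex.I := by push_cast; ring
  have hB : ((↑Real.pi * (↑t + ↑y * Complex.I) - ↑Real.pi * ↑t) / 2 : ℂ)
      = ↑(Real.pi * y / 2) * Complex.I := by push_cast; ring
  rw [hA, hB, norm_mul, norm_mul, norm_neg, Complex.norm_two]
  have habs : ‖↑(Real.pi * y / 2) * Complex.I‖ = Real.pi * |y| / 2 := by
    rw [norm_mul, Complex.norm_I, mul_one, Complex.norm_real, Real.norm_eq_abs, abs_div, abs_mul,
      abs_of_pos hπ]
    norm_num
  have hπy : Real.pi * |y| ≤ 2 := by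
    calc Real.pi * |y| ≤ Real.pi * (2 / Real.pi) := by gcongr
      _ = 2 := by field_simp
  have hsB : ‖Complex.sin (↑(Real.pi * y / 2) * Complex.I)‖ ≤ Real.pi * |y| := by
    have h1 : ‖↑(Real.pi * y / 2) * Complex.I‖ ≤ 1 := by
      rw [habs]; linarith
    calc ‖Complex.sin (↑(Real.pi * y / 2) * Complex.I)‖
        ≤ 2 * ‖↑(Real.pi * y / 2) * Complex.I‖ := sin_small h1
      _ = Real.pi * |y| := by rw [habs]; ring
  have hsA : ‖Complex.sin (↑(Real.pi * t) + ↑(Real.pi * y / 2) * Complex.I)‖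
      ≤ Real.exp 1 := by
    refine le_trans (sin_im_bound _) ?_
    rw [Real.exp_le_exp]
    have him : ((↑(Real.pi * t) + ↑(Real.pi * y / 2) * Complex.I : ℂ)).im = Real.pi * y / 2 := by
      simp
    rw [him]
    have : |Real.pi * y / 2| = Real.pi * |y| / 2 := by
      rw [abs_div, abs_mul, abs_of_pos hπ]; norm_num
    rw [this]; linarith
  have h0A : (0:ℝ) ≤ ‖Complex.sin (↑(Real.pi * t) + ↑(Real.pi * y / 2) * Complex.I)‖ :=
    norm_nonneg _
  have h0B : (0:ℝ) ≤ ‖Complex.sin (↑(Real.pi * y / 2) * Complex.I)‖ :=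
    norm_nonneg _
  nlinarith [Real.exp_pos (1:ℝ)]

end SinBounds

set_option maxHeartbeats 1000000 in
lemma reach {n : ℕ} {G : Set (Fin n → ℂ)} (hG : IsDom G) {a z : Fin n → ℂ}
    (ha : a ∈ G) (hz : z ∈ G) : (lempSet G a z).Nonempty := by
  classical
  obtain ⟨hOpen, hConn⟩ := hG
  have hπ := Real.pi_pos
  have hpc : IsPathConnected G := hOpen.isConnected_iff_isPathConnected.mp hConn
  obtain ⟨γ, hγ⟩ := hpc.joinedIn a ha z hz
  set f : ℝ → (Fin n → ℂ) := ⇑γ.extend with hf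
  have hfc : Continuous f := γ.continuous_extend
  have hfK : ∀ t : ℝ, f t ∈ range γ := by
    intro t
    rw [hf, ← γ.extend_range]
    exact Set.mem_range_self t
  have hKco : IsCompact (range γ) := isCompact_range γ.continuous
  have hKG : range γ ⊆ G := by rintro _ ⟨t, rfl⟩; exact hγ t
  obtain ⟨ε, hε, hεG⟩ := hKco.exists_thickening_subset_open hOpen hKG
  -- polynomial approximation of the path
  have hRe : ∀ i : Fin n, ∃ pp : Polynomial ℝ,
      ∀ x ∈ Icc (0:ℝ) 1, |pp.eval x - (f x i).re| < ε / 6 := fun i =>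
    exists_polynomial_near_of_continuousOn 0 1 _
      ((Complex.continuous_re.comp ((continuous_apply i).comp hfc)).continuousOn) _
      (by positivity)
  have hIm : ∀ i : Fin n, ∃ pp : Polynomial ℝ,
      ∀ x ∈ Icc (0:ℝ) 1, |pp.eval x - (f x i).im| < ε / 6 := fun i =>
    exists_polynomial_near_of_continuousOn 0 1 _
      ((Complex.continuous_im.comp ((continuous_apply i).comp hfc)).continuousOn) _
      (by positivity)
  choose pRe hpRe using hRe
  choose pIm hpIm using hIm
  set P0 : ℂ → (Fin n → ℂ) :=
    fun w i => Polynomial.aeval w (pRe i) + Polynomial.aeval w (pIm i) * Complex.I with hP0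
  have hP0d : Differentiable ℂ P0 := by
    rw [differentiable_pi]
    intro i
    exact (Polynomial.differentiable_aeval _).add
      ((Polynomial.differentiable_aeval _).mul_const _)
  have hP0near : ∀ t ∈ Icc (0:ℝ) 1, ‖P0 ↑t - f t‖ ≤ ε / 3 := by
    intro t ht
    rw [pi_norm_le_iff_of_nonneg (by positivity)]
    intro i
    have e1 := hpRe i t ht
    have e2 := hpIm i t ht
    have h1 : (Polynomial.aeval ((t:ℝ) : ℂ)) (pRe i) = (((pRe i).eval t : ℝ) : ℂ) := by
      rw [show ((t:ℝ) : ℂ) = algebraMap ℝ ℂ t from rfl,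
        Polynomial.aeval_algebraMap_apply_eq_algebraMap_eval]
      rfl
    have h2 : (Polynomial.aeval ((t:ℝ) : ℂ)) (pIm i) = (((pIm i).eval t : ℝ) : ℂ) := by
      rw [show ((t:ℝ) : ℂ) = algebraMap ℝ ℂ t from rfl,
        Polynomial.aeval_algebraMap_apply_eq_algebraMap_eval]
      rfl
    have hv : (P0 ↑t - f t) i
        = ↑((pRe i).eval t - (f t i).re) + ↑((pIm i).eval t - (f t i).im) * Complex.I := by
      rw [Pi.sub_apply, hP0]
      simp only []
      rw [h1, h2]
      rw [Complex.ext_iff]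
      constructor <;>
        simp [Complex.add_re, Complex.add_im, Complex.sub_re, Complex.sub_im, Complex.mul_re,
          Complex.mul_im, Complex.I_re, Complex.I_im, Complex.ofReal_re, Complex.ofReal_im]
    rw [hv]
    have hn : ‖(↑((pRe i).eval t - (f t i).re)
        + ↑((pIm i).eval t - (f t i).im) * Complex.I : ℂ)‖
        ≤ |(pRe i).eval t - (f t i).re| + |(pIm i).eval t - (f t i).im| := by
      refine le_trans (norm_add_le _ _) ?_
      simp [norm_mul, Complex.norm_I, ← Complex.ofReal_sub, Complex.norm_real]
    refine le_trans hn ?_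
    linarith
  set P : ℂ → (Fin n → ℂ) := fun w => P0 w + (1 - w) • (a - P0 0) + w • (z - P0 1) with hP
  have hPd : Differentiable ℂ P :=
    (hP0d.add (((differentiable_const (1:ℂ)).sub differentiable_id).smul_const _)).add
      (differentiable_id.smul_const _)
  have hPa : P 0 = a := by
    rw [hP]
    simp only [sub_zero, one_smul, zero_smul, add_zero]
    abel
  have hPz : P 1 = z := by
    rw [hP]
    simp only [sub_self, zero_smul, one_smul, add_zero, zero_add]
    abel
  have hPnear : ∀ t ∈ Icc (0:ℝ) 1, P ↑t ∈ G := by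
    intro t ht
    have h0' : ‖a - P0 0‖ ≤ ε / 3 := by
      have h := hP0near 0 (by norm_num)
      rw [show (((0:ℝ)):ℂ) = 0 by norm_num, show f 0 = a from γ.extend_zero] at h
      calc ‖a - P0 0‖ = ‖P0 0 - a‖ := by rw [norm_sub_rev]
        _ ≤ ε / 3 := h
    have h1' : ‖z - P0 1‖ ≤ ε / 3 := by
      have h := hP0near 1 (by norm_num)
      rw [show (((1:ℝ)):ℂ) = 1 by norm_num, show f 1 = z from γ.extend_one] at h
      calc ‖z - P0 1‖ = ‖P0 1 - z‖ := by rw [norm_sub_rev]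
        _ ≤ ε / 3 := h
    have hmain := hP0near t ht
    have expand : P ↑t - f t
        = (P0 ↑t - f t) + ((1:ℂ) - (t:ℂ)) • (a - P0 0) + ((t:ℂ)) • (z - P0 1) := by
      simp only [hP]
      abel
    have n1 : ‖((1:ℂ) - (t:ℂ)) • (a - P0 0)‖ ≤ (1 - t) * (ε / 3) := by
      rw [norm_smul]
      have hns : ‖((1:ℂ) - (t:ℂ))‖ = 1 - t := by
        rw [show ((1:ℂ) - (t:ℂ)) = ((1 - t : ℝ) : ℂ) by push_cast; ring, Complex.norm_real,
          Real.norm_eq_abs]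
        exact _root_.abs_of_nonneg (by linarith [ht.2])
      rw [hns]
      exact mul_le_mul_of_nonneg_left h0' (by linarith [ht.2])
    have n2 : ‖((t:ℝ):ℂ) • (z - P0 1)‖ ≤ t * (ε / 3) := by
      rw [norm_smul]
      have hns : ‖((t:ℝ):ℂ)‖ = t := by
        rw [Complex.norm_real, Real.norm_eq_abs]
        exact _root_.abs_of_nonneg ht.1
      rw [hns]
      exact mul_le_mul_of_nonneg_left h1' ht.1
    have htot : ‖P ↑t - f t‖ < ε := by
      rw [expand]
      refine lt_of_le_of_lt (norm_add₃_le) ?_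
      have hsum : (1 - t) * (ε / 3) + t * (ε / 3) = ε / 3 := by ring
      linarith
    refine hεG ?_
    rw [Metric.mem_thickening_iff]
    exact ⟨f t, hfK t, by rwa [dist_eq_norm]⟩
  set Jset : Set ℂ := (fun t : ℝ => (t : ℂ)) '' Icc 0 1 with hJ
  have hJco : IsCompact Jset := isCompact_Icc.image Complex.continuous_ofReal
  have hJU : Jset ⊆ P ⁻¹' G := by rintro _ ⟨t, ht, rfl⟩; exact hPnear t ht
  obtain ⟨δ, hδ, hδsub⟩ :=
    hJco.exists_thickening_subset_open (hOpen.preimage hPd.continuous) hJU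
  set s : ℝ := min (2 / Real.pi) (δ / (2 * Real.exp 1 * Real.pi)) with hs
  have hexp1 : (0:ℝ) < Real.exp 1 := Real.exp_pos 1
  have hspos : 0 < s := lt_min (by positivity) (by positivity)
  have hs1 : s ≤ 2 / Real.pi := min_le_left _ _
  have hs2 : s ≤ δ / (2 * Real.exp 1 * Real.pi) := min_le_right _ _
  set Hm : ℂ → ℂ := fun ζ => (1 - Complex.cos (↑Real.pi * ζ)) / 2 with hHm
  have hHstrip : ∀ ζ : ℂ, |ζ.im| ≤ s → Hm ζ ∈ Metric.thickening δ Jset := by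
    intro ζ hζ
    have hyπ : |ζ.im| ≤ 2 / Real.pi := le_trans hζ hs1
    have hq0 : (1 - Real.cos (Real.pi * ζ.re)) / 2 ∈ Icc (0:ℝ) 1 := by
      constructor
      · nlinarith [Real.cos_le_one (Real.pi * ζ.re)]
      · nlinarith [Real.neg_one_le_cos (Real.pi * ζ.re)]
    rw [Metric.mem_thickening_iff]
    refine ⟨↑((1 - Real.cos (Real.pi * ζ.re)) / 2), ⟨_, hq0, rfl⟩, ?_⟩
    have hζeq : ζ = ↑ζ.re + ↑ζ.im * Complex.I := (Complex.re_add_im ζ).symm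
    have hdiffeq : Hm ζ - ↑((1 - Real.cos (Real.pi * ζ.re)) / 2)
        = -(Complex.cos (↑Real.pi * ζ) - Complex.cos (↑Real.pi * ↑ζ.re)) / 2 := by
      rw [hHm]
      simp only []
      rw [show ((((1 - Real.cos (Real.pi * ζ.re)) / 2 : ℝ)) : ℂ)
          = (1 - Complex.cos (↑Real.pi * ↑ζ.re)) / 2 by
        push_cast [Complex.ofReal_cos]; ring]
      ring
    rw [Complex.dist_eq, hdiffeq, norm_div, norm_neg, Complex.norm_two]
    have hc : ‖Complex.cos (↑Real.pi * ζ) - Complex.cos (↑Real.pi * ↑ζ.re)‖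
        ≤ 2 * Real.exp 1 * (Real.pi * |ζ.im|) := by
      have hcc := cos_near (t := ζ.re) (y := ζ.im) hyπ
      rw [Complex.re_add_im] at hcc
      exact hcc
    have hb : Real.exp 1 * Real.pi * |ζ.im| ≤ δ / 2 := by
      have h1 : Real.exp 1 * Real.pi * |ζ.im| ≤ Real.exp 1 * Real.pi * s := by
        apply mul_le_mul_of_nonneg_left hζ (by positivity)
      have h2 : Real.exp 1 * Real.pi * s
          ≤ Real.exp 1 * Real.pi * (δ / (2 * Real.exp 1 * Real.pi)) :=
        mul_le_mul_of_nonneg_left hs2 (by positivity)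
      have h3 : Real.exp 1 * Real.pi * (δ / (2 * Real.exp 1 * Real.pi)) = δ / 2 := by
        field_simp
      linarith
    calc ‖Complex.cos (↑Real.pi * ζ) - Complex.cos (↑Real.pi * ↑ζ.re)‖ / 2
        ≤ (2 * Real.exp 1 * (Real.pi * |ζ.im|)) / 2 := by linarith
      _ = Real.exp 1 * Real.pi * |ζ.im| := by ring
      _ ≤ δ / 2 := hb
      _ < δ := by linarith
  set σ : ℂ := ((2 * s / Real.pi : ℝ) : ℂ) with hσ
  set g : ℂ → ℂ := fun w => σ * Complex.log ((1 + w) / (1 - w)) with hgdef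
  have hdenom : ∀ w : ℂ, ‖w‖ < 1 → (1 - w) ≠ 0 := by
    intro w hw h
    have hw1 : w = 1 := by linear_combination -h
    rw [hw1] at hw
    simp at hw
  have hratio_re : ∀ w : ℂ, ‖w‖ < 1 → 0 < ((1 + w) / (1 - w)).re := by
    intro w hw
    have hne := hdenom w hw
    have h1 : ((1 + w) / (1 - w)).re = (1 - Complex.normSq w) / Complex.normSq (1 - w) := by
      rw [Complex.div_re]
      congr 1
      · simp only [Complex.normSq_apply, Complex.add_re, Complex.add_im, Complex.sub_re,
          Complex.sub_im, Complex.one_re, Complex.one_im]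
        ring
    rw [h1]
    have hnw : Complex.normSq w < 1 := by
      rw [← Complex.sq_norm]; nlinarith [norm_nonneg w]
    exact div_pos (by linarith) (Complex.normSq_pos.mpr hne)
  have hgim : ∀ w : ℂ, ‖w‖ < 1 → |(g w).im| < s := by
    intro w hw
    have hre := hratio_re w hw
    have harg : |Complex.arg ((1 + w) / (1 - w))| < Real.pi / 2 :=
      Complex.abs_arg_lt_pi_div_two_iff.mpr (Or.inl hre)
    have him : (g w).im = (2 * s / Real.pi) * Complex.arg ((1 + w) / (1 - w)) := by
      rw [hgdef]
      simp only [hσ, Complex.mul_im, Complex.ofReal_re, Complex.ofReal_im, Complex.log_im,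
        zero_mul, add_zero]
    rw [him, abs_mul, abs_of_pos (by positivity : (0:ℝ) < 2 * s / Real.pi)]
    calc (2 * s / Real.pi) * |Complex.arg ((1 + w) / (1 - w))|
        < (2 * s / Real.pi) * (Real.pi / 2) := by
          exact mul_lt_mul_of_pos_left harg (by positivity)
      _ = s := by field_simp
  have hHd : Differentiable ℂ Hm := by
    rw [hHm]
    exact ((differentiable_const _).sub
      (Complex.differentiable_cos.comp (differentiable_id.const_mul _))).div_const 2
  have hφd : DifferentiableOn ℂ (fun w => P (Hm (g w))) discE := by
    intro w hw
    have hw' : ‖w‖ < 1 := hw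
    have hden := hdenom w hw'
    have hq : DifferentiableAt ℂ (fun w : ℂ => (1 + w) / (1 - w)) w :=
      ((differentiableAt_const _).add differentiableAt_id).div
        ((differentiableAt_const _).sub differentiableAt_id) hden
    have hlog : DifferentiableAt ℂ Complex.log ((1 + w) / (1 - w)) :=
      Complex.differentiableAt_log (Complex.mem_slitPlane_iff.mpr (Or.inl (hratio_re w hw')))
    have hgd : DifferentiableAt ℂ g w := by
      rw [hgdef]
      exact (hlog.comp w hq).const_mul σ
    exact (((hPd _).comp _ ((hHd _).comp w hgd))).differentiableWithinAt
  have hφm : MapsTo (fun w => P (Hm (g w))) discE G := by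
    intro w hw
    have hw' : ‖w‖ < 1 := hw
    exact hδsub (hHstrip _ (le_of_lt (hgim w hw')))
  have hg0 : g 0 = 0 := by
    rw [hgdef]
    simp [Complex.log_one]
  have hH0 : Hm 0 = 0 := by
    rw [hHm]
    simp [Complex.cos_zero]
  set T : ℝ := Real.exp (Real.pi / (2 * s)) with hT
  have hT1 : 1 < T := by
    rw [hT, Real.one_lt_exp_iff]
    positivity
  set mμ : ℝ := (T - 1) / (T + 1) with hmμ
  have hm0 : 0 < mμ := div_pos (by linarith) (by linarith)
  have hm1 : mμ < 1 := by
    rw [hmμ, div_lt_one (by linarith)]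
    linarith
  have hμmem : ((mμ : ℝ) : ℂ) ∈ discE := by
    show ‖_‖ < 1
    rw [Complex.norm_real, Real.norm_eq_abs, abs_of_pos hm0]
    exact hm1
  have hgμ : g ↑mμ = 1 := by
    have hT1' : T + 1 ≠ 0 := by linarith
    have hr : (1 + mμ) / (1 - mμ) = T := by
      rw [hmμ]
      rw [div_eq_iff (by
        intro h
        have : (1:ℝ) - (T - 1)/(T + 1) = 0 := h
        rw [sub_eq_zero] at this
        rw [eq_comm, div_eq_one_iff_eq hT1'] at this
        linarith)]
      field_simp
      ring
    have hrat : (1 + ((mμ : ℝ) : ℂ)) / (1 - ((mμ : ℝ) : ℂ)) = ((T : ℝ) : ℂ) := by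
      rw [← hr]
      push_cast
      ring
    rw [hgdef]
    simp only []
    rw [hrat, ← Complex.ofReal_log (by linarith : (0:ℝ) ≤ T), hT, Real.log_exp, hσ,
      ← Complex.ofReal_mul]
    rw [show (2 * s / Real.pi) * (Real.pi / (2 * s)) = 1 by field_simp]
    exact Complex.ofReal_one
  have hH1 : Hm 1 = 1 := by
    rw [hHm]
    simp only [mul_one]
    rw [show Complex.cos ↑Real.pi = -1 by rw [← Complex.ofReal_cos, Real.cos_pi]; norm_num]
    norm_num
  refine ⟨‖((mμ : ℝ) : ℂ)‖, ((mμ : ℝ) : ℂ), hμmem, fun w => P (Hm (g w)),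
    hφd, hφm, ?_, ?_, rfl⟩
  · show P (Hm (g 0)) = a
    rw [hg0, hH0, hPa]
  · show P (Hm (g ((mμ : ℝ) : ℂ))) = z
    rw [hgμ, hH1, hPz]

end DmaxAux

open DmaxAux in
/-- the family `d^max` satisfies the axioms (E), (H) and (M). -/
theorem stmt_1 :
    (∀ p : ℂ → ℝ, (∀ a, 0 ≤ p a) → ∀ z ∈ discE,
      infProd discE (fun a => mE a z ^ p a) ≤ dMax discE p z ∧
      dMax discE p z ≤ sInf {r : ℝ | ∃ a ∈ discE, r = mE a z ^ p a}) ∧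
    (∀ (n m : ℕ) (G : Set (Fin n → ℂ)) (D : Set (Fin m → ℂ)), IsDom G → IsDom D →
      ∀ F : (Fin n → ℂ) → (Fin m → ℂ), DifferentiableOn ℂ F G → MapsTo F G D →
      ∀ q : (Fin m → ℂ) → ℝ, (∀ b, 0 ≤ q b) →
      ∀ z ∈ G, dMax D q (F z) ≤ dMax G (q ∘ F) z) ∧
    (∀ (n : ℕ) (G : Set (Fin n → ℂ)), IsDom G →
      ∀ p q : (Fin n → ℂ) → ℝ, (∀ a, 0 ≤ p a) → (∀ a, p a ≤ q a) →
      ∀ z ∈ G, dMax G q z ≤ dMax G p z) := by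
  refine ⟨?_, ?_, ?_⟩
  · -- (E)
    intro p hp z hzE
    constructor
    · refine le_csInf ⟨_, z, hzE, rfl⟩ ?_
      rintro r ⟨a, haE, rfl⟩
      have h1 : infProd discE (fun a => mE a z ^ p a) ≤ mE a z ^ p a := by
        refine csInf_le ⟨0, ?_⟩ ⟨{a}, by simpa using haE, by simp⟩
        rintro r ⟨B, hB, rfl⟩
        exact Finset.prod_nonneg fun x _ => Real.rpow_nonneg (norm_nonneg _) _
      refine h1.trans ?_
      exact Real.rpow_le_rpow (norm_nonneg _) (mE_le_lemp haE hzE) (hp a)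
    · refine le_csInf ⟨_, 0, by simp [discE], rfl⟩ ?_
      rintro r ⟨a, haE, rfl⟩
      refine (dMax_le haE).trans ?_
      exact Real.rpow_le_rpow (lemp_nonneg _ _ _) (lemp_le_mE haE hzE) (hp a)
  · -- (H)
    intro n m G D hG hD F hF hFm q hq z hzG
    refine le_csInf ⟨_, z, hzG, rfl⟩ ?_
    rintro r ⟨x, hxG, rfl⟩
    have h1 : dMax D q (F z) ≤ lemp D (F x) (F z) ^ q (F x) := dMax_le (hFm hxG)
    refine h1.trans ?_
    show lemp D (F x) (F z) ^ q (F x) ≤ lemp G x z ^ (q ∘ F) x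
    exact Real.rpow_le_rpow (lemp_nonneg _ _ _)
      (lemp_mono hF hFm (reach hG hxG hzG)) (hq (F x))
  · -- (M)
    intro n G hG p q hp hpq z hzG
    refine le_csInf ⟨_, z, hzG, rfl⟩ ?_
    rintro r ⟨a, haG, rfl⟩
    refine (dMax_le haG).trans ?_
    rcases eq_or_lt_of_le (lemp_nonneg G a z) with h0 | h0
    · rw [← h0]
      by_cases hqa : q a = 0
      · have hpa : p a = 0 := le_antisymm (by rw [← hqa]; exact hpq a) (hp a)
        rw [hqa, hpa]
      · rw [Real.zero_rpow hqa]
        exact Real.rpow_nonneg le_rfl _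
    · exact Real.rpow_le_rpow_of_exponent_ge h0 (lemp_le_one G a z) (hpq a)
end
end

section
/- The family (d_G^min)_G satisfies the three axioms: (E) ∏_{a∈E}[m_E(a,z)]^{p(a)} ≤ d_E^min(p,z) ≤ inf{[m_E(a,z)]^{p(a)} : a ∈ E} for all p : E → ℝ₊ and z ∈ E; (H) for all domains G ⊆ ℂⁿ, D ⊆ ℂᵐ, every holomorphic map F : G → D and every q : D → ℝ₊, d_D^min(q, F(z)) ≤ d_G^min(q ∘ F, z) for all z ∈ G; (M) for p, q : G → ℝ₊ with p ≤ q pointwise, d_G^min(q,·) ≤ d_G^min(p,·) on G. -/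
open Complex Set Filter Asymptotics
open scoped ENNReal

noncomputable section

variable {V W : Type*} [NormedAddCommGroup V] [NormedSpace ℂ V]
  [NormedAddCommGroup W] [NormedSpace ℂ W]

namespace DMinAux

def moeb (z w : ℂ) : ℂ := (w - z) / (1 - (starRingEnd ℂ) z * w)

lemma mem_discE {z : ℂ} : z ∈ discE ↔ ‖z‖ < 1 := Iff.rfl

lemma discE_eq_ball : discE = Metric.ball (0 : ℂ) 1 := by
  ext z; simp [discE, Metric.mem_ball, dist_zero_right]

lemma denom_ne_zero {z w : ℂ} (hz : z ∈ discE) (hw : w ∈ discE) :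
    (1 : ℂ) - (starRingEnd ℂ) z * w ≠ 0 := by
  intro h
  have h1 : ‖(starRingEnd ℂ) z * w‖ < 1 := by
    rw [norm_mul, Complex.norm_conj]
    nlinarith [norm_nonneg z, norm_nonneg w, mem_discE.mp hz, mem_discE.mp hw]
  rw [sub_eq_zero] at h
  rw [← h] at h1
  simp at h1

lemma normSq_identity (z w : ℂ) :
    Complex.normSq (1 - (starRingEnd ℂ) z * w) - Complex.normSq (w - z)
      = (1 - Complex.normSq z) * (1 - Complex.normSq w) := by
  simp only [Complex.normSq_apply, Complex.sub_re, Complex.sub_im, Complex.mul_re,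
    Complex.mul_im, Complex.conj_re, Complex.conj_im, Complex.one_re, Complex.one_im]
  ring

lemma normSq_lt_one {z : ℂ} (hz : z ∈ discE) : Complex.normSq z < 1 := by
  have := mem_discE.mp hz
  rw [← Complex.sq_norm]
  nlinarith [norm_nonneg z]

lemma moeb_mem {z w : ℂ} (hz : z ∈ discE) (hw : w ∈ discE) : moeb z w ∈ discE := by
  rw [mem_discE, moeb, norm_div, div_lt_one]
  · have h := normSq_identity z w
    have h1 := normSq_lt_one hz
    have h2 := normSq_lt_one hw
    have hlt : Complex.normSq (w - z) < Complex.normSq (1 - (starRingEnd ℂ) z * w) := by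
      nlinarith
    rw [Complex.norm_def, Complex.norm_def]
    exact Real.sqrt_lt_sqrt (Complex.normSq_nonneg _) hlt
  · exact norm_pos_iff.mpr (denom_ne_zero hz hw)

lemma moeb_self (z : ℂ) : moeb z z = 0 := by simp [moeb]

lemma neg_mem {z : ℂ} (hz : z ∈ discE) : -z ∈ discE := by
  rw [mem_discE] at hz ⊢; simpa using hz

lemma moeb_inv {z w : ℂ} (hz : z ∈ discE) (hw : w ∈ discE) : moeb (-z) (moeb z w) = w := by
  have hd := denom_ne_zero hz hw
  have hz2 : (1 : ℂ) - (starRingEnd ℂ) z * z ≠ 0 := denom_ne_zero hz hz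
  have hout : (1 : ℂ) - (starRingEnd ℂ) (-z) * moeb z w ≠ 0 :=
    denom_ne_zero (neg_mem hz) (moeb_mem hz hw)
  have hd' : (1 : ℂ) - w * (starRingEnd ℂ) z ≠ 0 := by rwa [mul_comm]
  rw [moeb, div_eq_iff hout, moeb, map_neg]
  field_simp
  ring

lemma moeb_injOn {z a b : ℂ} (hz : z ∈ discE) (ha : a ∈ discE) (hb : b ∈ discE)
    (h : moeb z a = moeb z b) : a = b := by
  have := moeb_inv hz ha
  rw [h, moeb_inv hz hb] at this
  exact this.symm

lemma moeb_diffOn {z : ℂ} (hz : z ∈ discE) : DifferentiableOn ℂ (moeb z) discE := by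
  apply DifferentiableOn.div
  · fun_prop
  · fun_prop
  · intro w hw; exact denom_ne_zero hz hw

lemma moeb_mapsTo {z : ℂ} (hz : z ∈ discE) : MapsTo (moeb z) discE discE :=
  fun _ hw => moeb_mem hz hw

lemma moeb_neg_zero {z : ℂ} : moeb (-z) 0 = z := by simp [moeb]

lemma mE_eq (a z : ℂ) : mE a z = ‖moeb z a‖ := by
  unfold mE moeb
  rw [norm_div, norm_div, norm_sub_rev z a]
  congr 1
  rw [← Complex.norm_conj (1 - (starRingEnd ℂ) a * z)]
  congr 1
  simp only [map_sub, map_one, map_mul, Complex.conj_conj]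
  ring

lemma mE_nonneg (a z : ℂ) : 0 ≤ mE a z := norm_nonneg _

lemma minTerm_nonneg (G : Set V) (p : V → ℝ) (f : V → ℂ) (μ : ℂ) :
    0 ≤ minTerm G p f μ := by
  unfold minTerm; split
  · exact le_refl 0
  · exact Real.rpow_nonneg (norm_nonneg μ) _

lemma bddBelow_prodSet {α : Type*} (A : Set α) (h : α → ℝ) (hh : ∀ a, 0 ≤ h a) :
    BddBelow {r : ℝ | ∃ B : Finset α, ↑B ⊆ A ∧ r = ∏ a ∈ B, h a} := by
  refine ⟨0, ?_⟩
  rintro r ⟨B, -, rfl⟩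
  exact Finset.prod_nonneg fun a _ => hh a

lemma infProd_nonneg {α : Type*} (A : Set α) (h : α → ℝ) (hh : ∀ a, 0 ≤ h a) :
    0 ≤ infProd A h := by
  apply Real.sInf_nonneg
  rintro r ⟨B, -, rfl⟩
  exact Finset.prod_nonneg fun a _ => hh a

lemma infProd_le_prod {α : Type*} (A : Set α) (h : α → ℝ) (hh : ∀ a, 0 ≤ h a)
    (B : Finset α) (hB : ↑B ⊆ A) : infProd A h ≤ ∏ a ∈ B, h a :=
  csInf_le (bddBelow_prodSet A h hh) ⟨B, hB, rfl⟩

lemma infProd_le_one {α : Type*} (A : Set α) (h : α → ℝ) (hh : ∀ a, 0 ≤ h a) :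
    infProd A h ≤ 1 := by
  simpa using infProd_le_prod A h hh ∅ (by simp)

lemma bddAbove_dMinSet (G : Set V) (p : V → ℝ) (z : V) :
    BddAbove {r : ℝ | ∃ f : V → ℂ, DifferentiableOn ℂ f G ∧ MapsTo f G discE ∧
      f z = 0 ∧ r = infProd (f '' G) (minTerm G p f)} := by
  refine ⟨1, ?_⟩
  rintro r ⟨f, -, -, -, rfl⟩
  exact infProd_le_one _ _ (minTerm_nonneg G p f)

lemma zero_fun_mem (G : Set V) (p : V → ℝ) (z : V) :
    infProd ((fun _ => (0:ℂ)) '' G) (minTerm G p (fun _ => (0:ℂ))) ∈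
      {r : ℝ | ∃ f : V → ℂ, DifferentiableOn ℂ f G ∧ MapsTo f G discE ∧
        f z = 0 ∧ r = infProd (f '' G) (minTerm G p f)} :=
  ⟨fun _ => 0, differentiableOn_const 0, fun _ _ => by simp [mem_discE], rfl, rfl⟩

lemma le_dMin (G : Set V) (p : V → ℝ) (z : V) (f : V → ℂ)
    (hd : DifferentiableOn ℂ f G) (hm : MapsTo f G discE) (hz : f z = 0) :
    infProd (f '' G) (minTerm G p f) ≤ dMin G p z :=
  le_csSup (bddAbove_dMinSet G p z) ⟨f, hd, hm, hz, rfl⟩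

lemma dMin_le (G : Set V) (p : V → ℝ) (z : V) (c : ℝ)
    (h : ∀ f : V → ℂ, DifferentiableOn ℂ f G → MapsTo f G discE → f z = 0 →
      infProd (f '' G) (minTerm G p f) ≤ c) : dMin G p z ≤ c := by
  apply csSup_le ⟨_, zero_fun_mem G p z⟩
  rintro r ⟨f, hd, hm, hz, rfl⟩
  exact h f hd hm hz

lemma term_aux {x : ℝ} (hx0 : 0 ≤ x) (hx1 : x ≤ 1) {s t : ℝ≥0∞} (hst : s ≤ t) :
    (if t = ⊤ then 0 else x ^ t.toReal) ≤ (if s = ⊤ then 0 else x ^ s.toReal) := by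
  by_cases ht : t = ⊤
  · rw [if_pos ht]
    split
    · exact le_refl 0
    · exact Real.rpow_nonneg hx0 _
  · have hs : s ≠ ⊤ := fun h => ht (top_le_iff.mp (h ▸ hst))
    rw [if_neg ht, if_neg hs]
    exact Real.rpow_le_rpow_of_exponent_ge' hx0 hx1 ENNReal.toReal_nonneg
      ((ENNReal.toReal_le_toReal hs ht).mpr hst)

lemma minTerm_le_minTerm {G1 : Set V} {G2 : Set W} {p1 : V → ℝ} {p2 : W → ℝ}
    {f1 : V → ℂ} {f2 : W → ℂ} {μ : ℂ} (hμ : ‖μ‖ ≤ 1)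
    (h : fiberSup G1 p1 f1 μ ≤ fiberSup G2 p2 f2 μ) :
    minTerm G2 p2 f2 μ ≤ minTerm G1 p1 f1 μ :=
  term_aux (norm_nonneg μ) hμ h

lemma fiberSup_comp_le {G : Set V} {D : Set W} {q : W → ℝ} {g : W → ℂ}
    {F : V → W} (hF : MapsTo F G D) (μ : ℂ) :
    fiberSup G (q ∘ F) (g ∘ F) μ ≤ fiberSup D q g μ := by
  refine iSup₂_le fun a ha => ?_
  obtain ⟨haG, hfa⟩ := ha
  exact le_iSup₂ (f := fun b (_ : b ∈ {b ∈ D | g b = μ}) => ENNReal.ofReal (q b))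
    (F a) ⟨hF haG, hfa⟩

lemma fiberSup_mono {G : Set V} {p q : V → ℝ} {f : V → ℂ} (hpq : ∀ a, p a ≤ q a) (μ : ℂ) :
    fiberSup G p f μ ≤ fiberSup G q f μ := by
  refine iSup₂_le fun a ha => ?_
  exact le_trans (ENNReal.ofReal_le_ofReal (hpq a))
    (le_iSup₂ (f := fun b (_ : b ∈ {b ∈ G | f b = μ}) => ENNReal.ofReal (q b)) a ha)

lemma ofReal_le_fiberSup {G : Set V} {p : V → ℝ} {f : V → ℂ} {a : V} (ha : a ∈ G) :
    ENNReal.ofReal (p a) ≤ fiberSup G p f (f a) :=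
  le_iSup₂ (f := fun b (_ : b ∈ {b ∈ G | f b = f a}) => ENNReal.ofReal (p b)) a ⟨ha, rfl⟩

lemma schwarz_pick {f : ℂ → ℂ} {z a : ℂ} (hd : DifferentiableOn ℂ f discE)
    (hm : MapsTo f discE discE) (hz : z ∈ discE) (hfz : f z = 0) (ha : a ∈ discE) :
    ‖f a‖ ≤ ‖moeb z a‖ := by
  have hnz := neg_mem hz
  have hd' : DifferentiableOn ℂ (f ∘ moeb (-z)) discE :=
    hd.comp (moeb_diffOn hnz) (moeb_mapsTo hnz)
  have hm' : MapsTo (f ∘ moeb (-z)) discE discE := hm.comp (moeb_mapsTo hnz)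
  have h0 : (f ∘ moeb (-z)) 0 = 0 := by
    simp only [Function.comp_apply, moeb_neg_zero, hfz]
  have hw : moeb z a ∈ discE := moeb_mem hz ha
  have key := Complex.norm_le_norm_of_mapsTo_ball
    (by rw [← discE_eq_ball]; exact hd')
    (by rw [← discE_eq_ball]; exact hm'.mono_right (by rw [discE_eq_ball]; exact Metric.ball_subset_closedBall)) h0
    (mem_discE.mp hw)
  rwa [Function.comp_apply, moeb_inv hz ha] at key

lemma fiber_moeb {z a : ℂ} (hz : z ∈ discE) (ha : a ∈ discE) :
    {b ∈ discE | moeb z b = moeb z a} = {a} := by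
  ext b
  simp only [Set.mem_setOf_eq, Set.mem_singleton_iff]
  constructor
  · rintro ⟨hb, h⟩; exact moeb_injOn hz hb ha h
  · rintro rfl; exact ⟨ha, rfl⟩

lemma fiberSup_moeb {z a : ℂ} (p : ℂ → ℝ) (hz : z ∈ discE) (ha : a ∈ discE) :
    fiberSup discE p (moeb z) (moeb z a) = ENNReal.ofReal (p a) := by
  unfold fiberSup
  rw [fiber_moeb hz ha]
  simp

lemma minTerm_moeb {z a : ℂ} (p : ℂ → ℝ) (hp : 0 ≤ p a) (hz : z ∈ discE) (ha : a ∈ discE) :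
    minTerm discE p (moeb z) (moeb z a) = mE a z ^ p a := by
  unfold minTerm
  rw [fiberSup_moeb p hz ha, if_neg ENNReal.ofReal_ne_top, ENNReal.toReal_ofReal hp, mE_eq]

lemma E_lower (p : ℂ → ℝ) (hp : ∀ a, 0 ≤ p a) {z : ℂ} (hz : z ∈ discE) :
    infProd discE (fun a => mE a z ^ p a) ≤ dMin discE p z := by
  have hstep : infProd discE (fun a => mE a z ^ p a)
      ≤ infProd (moeb z '' discE) (minTerm discE p (moeb z)) := by
    refine le_csInf ⟨1, ∅, by simp, by simp⟩ ?_
    rintro r ⟨B', hB', rfl⟩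
    have hinj : ∀ x ∈ B', ∀ y ∈ B', moeb (-z) x = moeb (-z) y → x = y := by
      intro x hx y hy hxy
      obtain ⟨a1, ha1, rfl⟩ := hB' hx
      obtain ⟨a2, ha2, rfl⟩ := hB' hy
      rw [moeb_inv hz ha1, moeb_inv hz ha2] at hxy
      rw [hxy]
    have hsub : ↑(B'.image (moeb (-z))) ⊆ discE := by
      intro a ha
      simp only [Finset.coe_image, Set.mem_image, Finset.mem_coe] at ha
      obtain ⟨μ, hμ, rfl⟩ := ha
      obtain ⟨a1, ha1, rfl⟩ := hB' hμ
      rwa [moeb_inv hz ha1]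
    refine le_trans (infProd_le_prod _ _
      (fun a => Real.rpow_nonneg (mE_nonneg a z) _) _ hsub) ?_
    rw [Finset.prod_image hinj]
    apply le_of_eq
    apply Finset.prod_congr rfl
    intro μ hμ
    obtain ⟨a1, ha1, rfl⟩ := hB' hμ
    rw [moeb_inv hz ha1, minTerm_moeb p (hp a1) hz ha1]
  exact hstep.trans (le_dMin _ _ _ _ (moeb_diffOn hz) (moeb_mapsTo hz) (moeb_self z))

lemma E_upper (p : ℂ → ℝ) (hp : ∀ a, 0 ≤ p a) {z : ℂ} (hz : z ∈ discE) :
    dMin discE p z ≤ sInf {r : ℝ | ∃ a ∈ discE, r = mE a z ^ p a} := by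
  refine le_csInf ⟨mE 0 z ^ p 0, 0, by simp [mem_discE], rfl⟩ ?_
  rintro r ⟨a, ha, rfl⟩
  apply dMin_le
  intro f hd hm hfz
  have h1 : infProd (f '' discE) (minTerm discE p f) ≤ minTerm discE p f (f a) := by
    have := infProd_le_prod (f '' discE) (minTerm discE p f) (minTerm_nonneg _ _ _)
      {f a} (by simpa using Set.mem_image_of_mem f ha)
    simpa using this
  refine h1.trans ?_
  unfold minTerm
  split
  · exact Real.rpow_nonneg (mE_nonneg a z) _
  · rename_i hne
    have hpa : p a ≤ (fiberSup discE p f (f a)).toReal :=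
      (ENNReal.ofReal_le_iff_le_toReal hne).mp (ofReal_le_fiberSup ha)
    have hfa : ‖f a‖ ≤ mE a z := by
      rw [mE_eq]; exact schwarz_pick hd hm hz hfz ha
    have hm1 : mE a z ≤ 1 := by
      rw [mE_eq]; exact (mem_discE.mp (moeb_mem hz ha)).le
    calc ‖f a‖ ^ (fiberSup discE p f (f a)).toReal
        ≤ mE a z ^ (fiberSup discE p f (f a)).toReal :=
          Real.rpow_le_rpow (norm_nonneg _) hfa ENNReal.toReal_nonneg
      _ ≤ mE a z ^ p a :=
          Real.rpow_le_rpow_of_exponent_ge' (mE_nonneg a z) hm1 (hp a) hpa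

lemma axiom_H {G : Set V} {D : Set W} (F : V → W)
    (hFd : DifferentiableOn ℂ F G) (hFm : MapsTo F G D) (q : W → ℝ) (z : V) :
    dMin D q (F z) ≤ dMin G (q ∘ F) z := by
  apply dMin_le
  intro g hgd hgm hgz
  have h1 : infProd (g '' D) (minTerm D q g)
      ≤ infProd ((g ∘ F) '' G) (minTerm G (q ∘ F) (g ∘ F)) := by
    refine le_csInf ⟨1, ∅, by simp, by simp⟩ ?_
    rintro r ⟨B, hB, rfl⟩
    have hsub : ↑B ⊆ g '' D := by
      intro μ hμ
      obtain ⟨a, haG, rfl⟩ := hB hμ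
      exact ⟨F a, hFm haG, rfl⟩
    refine le_trans (infProd_le_prod _ _ (minTerm_nonneg _ _ _) B hsub) ?_
    apply Finset.prod_le_prod (fun μ _ => minTerm_nonneg _ _ _ _)
    intro μ hμ
    obtain ⟨a, haG, rfl⟩ := hB hμ
    exact minTerm_le_minTerm (le_of_lt (mem_discE.mp (hgm (hFm haG))))
      (fiberSup_comp_le hFm _)
  exact h1.trans (le_dMin _ _ _ _ (hgd.comp hFd hFm) (hgm.comp hFm)
    (by simpa [Function.comp] using hgz))

lemma axiom_M {G : Set V} (p q : V → ℝ) (hpq : ∀ a, p a ≤ q a) (z : V) :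
    dMin G q z ≤ dMin G p z := by
  apply dMin_le
  intro f hd hm hfz
  have h1 : infProd (f '' G) (minTerm G q f) ≤ infProd (f '' G) (minTerm G p f) := by
    refine le_csInf ⟨1, ∅, by simp, by simp⟩ ?_
    rintro r ⟨B, hB, rfl⟩
    refine le_trans (infProd_le_prod _ _ (minTerm_nonneg _ _ _) B hB) ?_
    apply Finset.prod_le_prod (fun μ _ => minTerm_nonneg _ _ _ _)
    intro μ hμ
    obtain ⟨a, haG, rfl⟩ := hB hμ
    exact minTerm_le_minTerm (le_of_lt (mem_discE.mp (hm haG))) (fiberSup_mono hpq _)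
  exact h1.trans (le_dMin _ _ _ _ hd hm hfz)

end DMinAux

/-- the family `d^min` satisfies the axioms (E), (H) and (M). -/
theorem stmt_3 :
    (∀ p : ℂ → ℝ, (∀ a, 0 ≤ p a) → ∀ z ∈ discE,
      infProd discE (fun a => mE a z ^ p a) ≤ dMin discE p z ∧
      dMin discE p z ≤ sInf {r : ℝ | ∃ a ∈ discE, r = mE a z ^ p a}) ∧
    (∀ (n m : ℕ) (G : Set (Fin n → ℂ)) (D : Set (Fin m → ℂ)), IsDom G → IsDom D →
      ∀ F : (Fin n → ℂ) → (Fin m → ℂ), DifferentiableOn ℂ F G → MapsTo F G D →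
      ∀ q : (Fin m → ℂ) → ℝ, (∀ b, 0 ≤ q b) →
      ∀ z ∈ G, dMin D q (F z) ≤ dMin G (q ∘ F) z) ∧
    (∀ (n : ℕ) (G : Set (Fin n → ℂ)), IsDom G →
      ∀ p q : (Fin n → ℂ) → ℝ, (∀ a, 0 ≤ p a) → (∀ a, p a ≤ q a) →
      ∀ z ∈ G, dMin G q z ≤ dMin G p z) := by
  refine ⟨fun p hp z hz => ⟨DMinAux.E_lower p hp hz, DMinAux.E_upper p hp hz⟩,
    fun n m G D _ _ F hFd hFm q _ z hz => DMinAux.axiom_H F hFd hFm q z,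
    fun n G _ p q hp hpq z hz => DMinAux.axiom_M p q (fun a => hpq a) z⟩
end
end

section
/- For any domain G ⊆ ℂⁿ and any function p : G → ℤ₊, the function z ↦ m_G(p,z) is continuous on G. -/
open Complex Set Filter Asymptotics
open scoped ENNReal

noncomputable section

variable {V W : Type*} [NormedAddCommGroup V] [NormedSpace ℂ V]
  [NormedAddCommGroup W] [NormedSpace ℂ W]

/-- Uniform Schwarz-type Lipschitz estimate for holomorphic maps into the unit disc. -/
lemma schwarz_lip {n : ℕ} {G : Set (Fin n → ℂ)} {f : (Fin n → ℂ) → ℂ}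
    (hf : DifferentiableOn ℂ f G) (hmap : MapsTo f G discE)
    {a : Fin n → ℂ} {r : ℝ} (hr : 0 < r) (hball : Metric.ball a (2 * r) ⊆ G)
    {z w : Fin n → ℂ} (hz : z ∈ Metric.ball a (r / 2)) (hw : w ∈ Metric.ball a (r / 2)) :
    dist (f z) (f w) ≤ 2 / r * dist z w := by
  rcases eq_or_ne z w with rfl | hne
  · simp
  have hsub : Metric.ball a (r / 2) ⊆ G := fun x hx =>
    hball (Metric.ball_subset_ball (by linarith) hx)
  have hv : 0 < ‖z - w‖ := by
    rw [norm_pos_iff, sub_ne_zero]; exact hne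
  set v : Fin n → ℂ := z - w with hvdef
  set R : ℝ := r / ‖v‖ with hRdef
  have hvr : ‖v‖ < r := by
    have := dist_triangle z a w
    rw [Metric.mem_ball] at hz hw
    rw [dist_comm a w] at this
    have : dist z w < r := by linarith
    simpa [hvdef, dist_eq_norm] using this
  have hR1 : 1 < R := (one_lt_div hv).mpr hvr
  set g : ℂ → ℂ := fun t => f (w + t • v) with hgdef
  have hL : Differentiable ℂ fun t : ℂ => w + t • v :=
    (differentiable_id.smul_const v).const_add w
  have hLmaps : MapsTo (fun t : ℂ => w + t • v) (Metric.ball 0 R) (Metric.ball a (2 * r)) := by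
    intro t ht
    rw [Metric.mem_ball] at ht ⊢
    simp only [Complex.dist_eq, dist_zero_right] at ht
    calc dist (w + t • v) a ≤ dist (w + t • v) w + dist w a := dist_triangle _ _ _
      _ = ‖t • v‖ + dist w a := by rw [dist_eq_norm]; ring_nf
      _ < R * ‖v‖ + r / 2 := by
          rw [norm_smul]
          have h1 : ‖t‖ * ‖v‖ ≤ ‖t‖ * ‖v‖ := le_rfl
          have h2 : ‖t‖ * ‖v‖ < R * ‖v‖ := by
            exact mul_lt_mul_of_pos_right ht hv
          have := Metric.mem_ball.mp hw
          linarith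
      _ ≤ 2 * r := by
          rw [hRdef, div_mul_cancel₀ _ (ne_of_gt hv)]
          linarith
  have hg : DifferentiableOn ℂ g (Metric.ball 0 R) :=
    hf.comp (hL.differentiableOn) (fun t ht => hball (hLmaps ht))
  have hgmaps : MapsTo g (Metric.ball 0 R) (Metric.ball (g 0) 2) := by
    intro t ht
    have h0 : (0 : ℂ) ∈ Metric.ball (0 : ℂ) R := by
      simp only [Metric.mem_ball, dist_self]; linarith
    have ht1 : ‖g t‖ < 1 := hmap (hball (hLmaps ht))
    have ht0 : ‖g 0‖ < 1 := hmap (hball (hLmaps h0))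
    rw [Metric.mem_ball, dist_eq_norm]
    calc ‖g t - g 0‖ ≤ ‖g t‖ + ‖g 0‖ := norm_sub_le _ _
      _ < 2 := by
          linarith
  have h1mem : (1 : ℂ) ∈ Metric.ball (0 : ℂ) R := by
    simp only [Metric.mem_ball, dist_zero_right, norm_one]; exact hR1
  have key := Complex.dist_le_div_mul_dist_of_mapsTo_ball hg (hgmaps.mono_right Metric.ball_subset_closedBall) h1mem
  have hg1 : g 1 = f z := by simp [hgdef, hvdef]
  have hg0 : g 0 = f w := by simp [hgdef]
  rw [hg1, hg0] at key
  have : dist (1 : ℂ) 0 = 1 := by simp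
  rw [this, mul_one] at key
  calc dist (f z) (f w) ≤ 2 / R := key
    _ = 2 / r * ‖v‖ := by rw [hRdef]; field_simp
    _ = 2 / r * dist z w := by rw [hvdef, dist_eq_norm]

/-- `m_G(p,·)` is continuous on `G`. -/
theorem stmt_6 {n : ℕ} (G : Set (Fin n → ℂ)) (hG : IsDom G) (p : (Fin n → ℂ) → ℕ) :
    ContinuousOn (fun z => mFun G p z) G := by
  set S : (Fin n → ℂ) → Set ℝ := fun z =>
    {r : ℝ | ∃ f : (Fin n → ℂ) → ℂ, DifferentiableOn ℂ f G ∧ MapsTo f G discE ∧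
      (∀ a ∈ G, OrdGE f a (p a)) ∧ r = ‖f z‖} with hSdef
  have hmem0 : ∀ z, (0 : ℝ) ∈ S z := by
    intro z
    refine ⟨fun _ => 0, differentiableOn_const 0, ?_, ?_, by simp⟩
    · intro x _; simp [discE]
    · intro a _; exact Asymptotics.isBigO_zero _ _
  have hbdd : ∀ z ∈ G, ∀ x ∈ S z, x ≤ 1 := by
    intro z hz x hx
    obtain ⟨f, _, hmap, _, rfl⟩ := hx
    exact le_of_lt (hmap hz)
  intro z0 hz0
  obtain ⟨ε, hε, hball⟩ := Metric.isOpen_iff.mp hG.1 z0 hz0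
  set r : ℝ := ε / 2 with hrdef
  have hr : 0 < r := by positivity
  have hball' : Metric.ball z0 (2 * r) ⊆ G := by
    rw [hrdef]; convert hball using 2; ring
  have hsub : Metric.ball z0 (r / 2) ⊆ G := fun x hx =>
    hball' (Metric.ball_subset_ball (by linarith) hx)
  -- one-sided estimate
  have hone : ∀ z ∈ Metric.ball z0 (r / 2), ∀ w ∈ Metric.ball z0 (r / 2),
      mFun G p z ≤ mFun G p w + 2 / r * dist z w := by
    intro z hz w hw
    have hzG := hsub hz
    have hwG := hsub hw
    have hbddw : BddAbove (S w) := ⟨1, fun x hx => hbdd w hwG x hx⟩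
    have hsupw0 : 0 ≤ sSup (S w) := le_csSup hbddw (hmem0 w)
    have : mFun G p z = sSup (S z) := rfl
    rw [this]
    apply Real.sSup_le _ (by positivity)
    intro x hx
    obtain ⟨f, hd, hmap, hord, rfl⟩ := hx
    have hfw : ‖f w‖ ≤ sSup (S w) :=
      le_csSup hbddw ⟨f, hd, hmap, hord, rfl⟩
    have hlip := schwarz_lip hd hmap hr hball' hz hw
    have habs : ‖f z‖ ≤ ‖f w‖ + dist (f z) (f w) := by
      rw [Complex.dist_eq]
      calc ‖f z‖ = ‖f w + (f z - f w)‖ := by ring_nf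
        _ ≤ ‖f w‖ + ‖f z - f w‖ := norm_add_le _ _
    have : mFun G p w = sSup (S w) := rfl
    rw [this]
    calc ‖f z‖ ≤ ‖f w‖ + dist (f z) (f w) := habs
      _ ≤ sSup (S w) + 2 / r * dist z w := add_le_add hfw hlip
  -- Lipschitz on the small ball
  have hlipOn : LipschitzOnWith (Real.toNNReal (2 / r)) (fun z => mFun G p z)
      (Metric.ball z0 (r / 2)) := by
    apply LipschitzOnWith.of_dist_le_mul
    intro z hz w hw
    rw [Real.coe_toNNReal _ (by positivity)]
    rw [Real.dist_eq, abs_sub_le_iff]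
    constructor
    · have := hone z hz w hw; linarith
    · have := hone w hw z hz; rw [dist_comm] at this; linarith
  have hball_mem : Metric.ball z0 (r / 2) ∈ nhds z0 :=
    Metric.ball_mem_nhds z0 (by positivity)
  have hca : ContinuousAt (fun z => mFun G p z) z0 :=
    hlipOn.continuousOn.continuousAt hball_mem
  exact hca.continuousWithinAt
end
end

section
/- Let G ⊆ ℂⁿ be a domain, let (G_k) be an increasing sequence of domains with G_k ⊆ G_{k+1} and ∪_k G_k = G, and let p_k : G_k → ℤ₊ satisfy p_k ≤ p_{k+1} on G_k and p(a) = lim_k p_k(a) for all a ∈ G (p : G → ℤ₊). Then for every z ∈ G the sequence m_{G_k}(p_k, z) (defined for k with z ∈ G_k) is nonincreasing and converges to m_G(p, z). -/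
open Complex Set Filter Asymptotics
open scoped ENNReal

noncomputable section

variable {V W : Type*} [NormedAddCommGroup V] [NormedSpace ℂ V]
  [NormedAddCommGroup W] [NormedSpace ℂ W]

open Metric in
lemma dslope_bound {h : ℂ → ℂ} {R M : ℝ} (hR : 0 < R)
    (hd : DifferentiableOn ℂ h (ball 0 R))
    (hb : ∀ t ∈ ball (0:ℂ) R, ‖h t‖ ≤ M) (h0 : h 0 = 0) {t : ℂ} (ht : t ∈ ball (0:ℂ) R) :
    ‖dslope h 0 t‖ ≤ M / R := by
  have hM : 0 ≤ M := le_trans (norm_nonneg _) (hb 0 (mem_ball_self hR))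
  have key : ∀ ε > 0, ‖dslope h 0 t‖ ≤ (M + ε) / R := by
    intro ε hε
    refine Complex.norm_dslope_le_div_of_mapsTo_ball hd ?_ ht
    intro w hw
    rw [h0, mem_closedBall, dist_zero_right]
    exact le_trans (hb w hw) (le_add_of_nonneg_right hε.le)
  refine le_of_forall_pos_le_add fun ε hε => ?_
  calc ‖dslope h 0 t‖ ≤ (M + ε * R) / R := key (ε * R) (mul_pos hε hR)
    _ = M / R + ε := by field_simp

open Metric in
lemma onevar_schwarz {R : ℝ} (hR : 0 < R) :
    ∀ (m : ℕ) (M : ℝ), 0 ≤ M → ∀ (h : ℂ → ℂ), DifferentiableOn ℂ h (ball 0 R) →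
    (∀ t ∈ ball (0:ℂ) R, ‖h t‖ ≤ M) → (h =O[nhds 0] fun t : ℂ => ‖t‖ ^ m) →
    ∀ t ∈ ball (0:ℂ) R, ‖h t‖ ≤ M * (‖t‖ / R) ^ m := by
  intro m
  induction m with
  | zero =>
    intro M hM h hd hb hO t ht
    simpa using hb t ht
  | succ m ih =>
    intro M hM h hd hb hO t ht
    obtain ⟨C, hC⟩ := Asymptotics.isBigO_iff.mp hO
    have h0 : h 0 = 0 := by
      have h00 := hC.self_of_nhds
      simp only [norm_zero, zero_pow (Nat.succ_ne_zero m), Real.norm_eq_abs, abs_zero,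
        mul_zero] at h00
      exact norm_le_zero_iff.mp h00
    set h₁ : ℂ → ℂ := dslope h 0 with hh₁
    have hd₁ : DifferentiableOn ℂ h₁ (ball 0 R) :=
      (differentiableOn_dslope (ball_mem_nhds 0 hR)).mpr hd
    have hb₁ : ∀ s ∈ ball (0:ℂ) R, ‖h₁ s‖ ≤ M / R := fun s hs =>
      dslope_bound hR hd hb h0 hs
    have hpunct : ∀ s : ℂ, s ≠ 0 → ‖h s‖ ≤ C * ‖‖s‖ ^ (m+1)‖ → ‖h₁ s‖ ≤ C * ‖s‖ ^ m := by
      intro s hne hs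
      have hsn : (0:ℝ) < ‖s‖ := norm_pos_iff.mpr hne
      rw [hh₁, dslope_of_ne h hne, slope_def_field, h0, sub_zero, sub_zero, norm_div]
      rw [div_le_iff₀ hsn]
      rw [Real.norm_eq_abs, _root_.abs_of_nonneg (pow_nonneg (norm_nonneg s) _)] at hs
      calc ‖h s‖ ≤ C * ‖s‖ ^ (m+1) := hs
        _ = C * ‖s‖ ^ m * ‖s‖ := by ring
    have h1at0 : ‖h₁ 0‖ ≤ C * ‖(0:ℂ)‖ ^ m := by
      have hcont : ContinuousAt h₁ 0 :=
        continuousAt_dslope_same.mpr (hd.differentiableAt (ball_mem_nhds 0 hR))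
      have htt : Tendsto (fun s => ‖h₁ s‖) (nhdsWithin (0:ℂ) {(0:ℂ)}ᶜ) (nhds ‖h₁ 0‖) :=
        (hcont.tendsto.mono_left nhdsWithin_le_nhds).norm
      have hgg : Tendsto (fun s : ℂ => C * ‖s‖ ^ m) (nhdsWithin (0:ℂ) {(0:ℂ)}ᶜ)
          (nhds (C * ‖(0:ℂ)‖ ^ m)) :=
        ((continuous_const.mul (continuous_norm.pow m)).tendsto 0).mono_left nhdsWithin_le_nhds
      refine le_of_tendsto_of_tendsto htt hgg ?_
      filter_upwards [hC.filter_mono nhdsWithin_le_nhds, self_mem_nhdsWithin] with s hs hne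
      exact hpunct s hne hs
    have hO₁ : h₁ =O[nhds 0] fun s : ℂ => ‖s‖ ^ m := by
      rw [Asymptotics.isBigO_iff]
      refine ⟨C, ?_⟩
      filter_upwards [hC] with s hs
      rw [Real.norm_eq_abs, _root_.abs_of_nonneg (pow_nonneg (norm_nonneg s) _)]
      rcases eq_or_ne s 0 with rfl | hne
      · exact h1at0
      · exact hpunct s hne hs
    have hrec := ih (M / R) (div_nonneg hM hR.le) h₁ hd₁ hb₁ hO₁ t ht
    rcases eq_or_ne t 0 with rfl | hne
    · rw [h0, norm_zero]
      positivity
    · have : h t = t * h₁ t := by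
        rw [hh₁, dslope_of_ne h hne, slope_def_field, h0, sub_zero, sub_zero,
          mul_div_cancel₀ _ hne]
      rw [this, norm_mul]
      calc ‖t‖ * ‖h₁ t‖ ≤ ‖t‖ * (M / R * (‖t‖ / R) ^ m) := by
            exact mul_le_mul_of_nonneg_left hrec (norm_nonneg t)
        _ = M * (‖t‖ / R) ^ (m + 1) := by
            rw [pow_succ]
            field_simp

open Metric in
lemma line_hasDerivAt (x v : V) (t : ℂ) : HasDerivAt (fun s : ℂ => x + s • v) v t := by
  simpa using ((hasDerivAt_id t).smul_const v).const_add x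

open Metric in
lemma line_mem_ball {x v : V} {r : ℝ} (hv : v ≠ 0) {t : ℂ}
    (ht : t ∈ ball (0:ℂ) (r / ‖v‖)) : x + t • v ∈ ball x r := by
  have hvn : 0 < ‖v‖ := norm_pos_iff.mpr hv
  rw [mem_ball, dist_zero_right] at ht
  rw [mem_ball, dist_eq_norm]
  have : x + t • v - x = t • v := by abel
  rw [this, norm_smul]
  calc ‖t‖ * ‖v‖ < r / ‖v‖ * ‖v‖ := mul_lt_mul_of_pos_right ht hvn
    _ = r := by field_simp

open Metric in
lemma fderiv_bound {g : V → ℂ} {x : V} {r M : ℝ} (hr : 0 < r)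
    (hd : DifferentiableOn ℂ g (ball x r)) (hb : ∀ y ∈ ball x r, ‖g y‖ ≤ M) :
    ‖fderiv ℂ g x‖ ≤ 2 * M / r := by
  have hM : 0 ≤ M := le_trans (norm_nonneg _) (hb x (mem_ball_self hr))
  refine ContinuousLinearMap.opNorm_le_bound _ (by positivity) fun v => ?_
  rcases eq_or_ne v 0 with rfl | hv
  · simp
  have hvn : 0 < ‖v‖ := norm_pos_iff.mpr hv
  have hR : 0 < r / ‖v‖ := div_pos hr hvn
  set φ : ℂ → V := fun t => x + t • v with hφ
  have hφ0 : φ 0 = x := by simp [hφ]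
  have hhd : ∀ t ∈ ball (0:ℂ) (r / ‖v‖),
      HasDerivAt (fun s => g (φ s)) (fderiv ℂ g (φ t) v) t := by
    intro t ht
    have hgx : HasFDerivAt g (fderiv ℂ g (φ t)) (φ t) :=
      (hd.differentiableAt (isOpen_ball.mem_nhds (line_mem_ball hv ht))).hasFDerivAt
    exact hgx.comp_hasDerivAt t (line_hasDerivAt x v t)
  set h : ℂ → ℂ := fun t => g (φ t) - g x with hh
  have hdh : DifferentiableOn ℂ h (ball 0 (r / ‖v‖)) := fun t ht =>
    (((hhd t ht).differentiableAt).sub_const _).differentiableWithinAt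
  have hbh : ∀ t ∈ ball (0:ℂ) (r / ‖v‖), ‖h t‖ ≤ 2 * M := by
    intro t ht
    calc ‖g (φ t) - g x‖ ≤ ‖g (φ t)‖ + ‖g x‖ := norm_sub_le _ _
      _ ≤ M + M := add_le_add (hb _ (line_mem_ball hv ht)) (hb x (mem_ball_self hr))
      _ = 2 * M := by ring
  have h0 : h 0 = 0 := by simp [hh, hφ]
  have hD : HasDerivAt h (fderiv ℂ g x v) 0 := by
    have h1 := (hhd 0 (mem_ball_self hR)).sub_const (g x)
    rwa [hφ0] at h1
  have hfin := dslope_bound hR hdh hbh h0 (mem_ball_self hR)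
  rw [dslope_same, hD.deriv] at hfin
  calc ‖fderiv ℂ g x v‖ ≤ 2 * M / (r / ‖v‖) := hfin
    _ = 2 * M / r * ‖v‖ := by field_simp

open Metric in
lemma schwarz_multi {g : V → ℂ} {a : V} {R M : ℝ} (hR : 0 < R) (hM : 0 ≤ M)
    (hd : DifferentiableOn ℂ g (ball a R)) (hb : ∀ w ∈ ball a R, ‖g w‖ ≤ M)
    {m : ℕ} (hO : OrdGE g a m) : ∀ w ∈ ball a R, ‖g w‖ ≤ M * (‖w - a‖ / R) ^ m := by
  intro w hw
  rcases eq_or_ne w a with rfl | hne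
  · rcases Nat.eq_zero_or_pos m with rfl | hm
    · simpa using hb w hw
    · obtain ⟨C, hC⟩ := isBigO_iff.mp hO
      have h0 := hC.self_of_nhds
      simp only [sub_self, norm_zero, zero_pow hm.ne', Real.norm_eq_abs, abs_zero,
        mul_zero] at h0
      rw [sub_self, norm_zero, zero_div, zero_pow hm.ne', mul_zero]
      exact h0
  · set v : V := w - a with hv
    have hvne : v ≠ 0 := sub_ne_zero.mpr hne
    have hvn : 0 < ‖v‖ := norm_pos_iff.mpr hvne
    have hvR : ‖v‖ < R := by rwa [mem_ball, dist_eq_norm] at hw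
    have hR' : 0 < R / ‖v‖ := div_pos hR hvn
    set φ : ℂ → V := fun t => a + t • v with hφ
    have hφ0 : φ 0 = a := by simp [hφ]
    have hd' : DifferentiableOn ℂ (fun t => g (φ t)) (ball 0 (R / ‖v‖)) := by
      intro t ht
      have hgx : DifferentiableAt ℂ g (φ t) :=
        hd.differentiableAt (isOpen_ball.mem_nhds (line_mem_ball hvne ht))
      exact ((hgx.hasFDerivAt.comp_hasDerivAt t
        (line_hasDerivAt a v t)).differentiableAt).differentiableWithinAt
    have hb' : ∀ t ∈ ball (0:ℂ) (R / ‖v‖), ‖g (φ t)‖ ≤ M := fun t ht =>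
      hb _ (line_mem_ball hvne ht)
    have hφc : Tendsto φ (nhds 0) (nhds a) := by
      have hc : Continuous φ := continuous_const.add (continuous_id.smul continuous_const)
      simpa [hφ0] using hc.tendsto 0
    have hO' : (fun t => g (φ t)) =O[nhds (0:ℂ)] fun t : ℂ => ‖t‖ ^ m := by
      refine (hO.comp_tendsto hφc).trans ?_
      rw [isBigO_iff]
      refine ⟨‖v‖ ^ m, Eventually.of_forall fun t => ?_⟩
      have h1 : φ t - a = t • v := by simp [hφ]
      show ‖‖φ t - a‖ ^ m‖ ≤ ‖v‖ ^ m * ‖‖t‖ ^ m‖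
      rw [h1, norm_smul, Real.norm_eq_abs, Real.norm_eq_abs,
        _root_.abs_of_nonneg (pow_nonneg (mul_nonneg (norm_nonneg t) (norm_nonneg v)) m),
        _root_.abs_of_nonneg (pow_nonneg (norm_nonneg t) m), mul_pow]
      ring_nf
      exact le_refl _
    have hone : (1:ℂ) ∈ ball (0:ℂ) (R / ‖v‖) := by
      rw [mem_ball, dist_zero_right, norm_one, lt_div_iff₀ hvn, one_mul]
      exact hvR
    have := onevar_schwarz hR' m M hM _ hd' hb' hO' 1 hone
    have hφ1 : φ 1 = w := by simp [hφ, hv]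
    rw [hφ1, norm_one, one_div_div] at this
    exact this

open Metric in
lemma keyNF [FiniteDimensional ℂ V] {U : Ultrafilter ℕ} {F : ℕ → V → ℂ} {f : V → ℂ}
    {G : Set V}
    (hG : ∀ x ∈ G, ∃ ρ : ℝ, 0 < ρ ∧ ball x (9 * ρ) ⊆ G ∧
      ∀ᶠ k in (U : Filter ℕ), DifferentiableOn ℂ (F k) (ball x (9 * ρ)) ∧
        ∀ y ∈ ball x (9 * ρ), ‖F k y‖ ≤ 1)
    (hptw : ∀ x ∈ G, Tendsto (fun k => F k x) (U : Filter ℕ) (nhds (f x))) :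
    DifferentiableOn ℂ f G := by
  classical
  haveI : ProperSpace (V →L[ℂ] ℂ) := FiniteDimensional.proper ℂ _
  -- Lipschitz bound for members of the family
  have lip : ∀ x : V, ∀ ρ : ℝ, 0 < ρ → ∀ g : V → ℂ,
      DifferentiableOn ℂ g (ball x (9 * ρ)) → (∀ y ∈ ball x (9 * ρ), ‖g y‖ ≤ 1) →
      ∀ y₁ ∈ ball x (5 * ρ), ∀ y₂ ∈ ball x (5 * ρ),
        ‖g y₁ - g y₂‖ ≤ 1 / (2 * ρ) * ‖y₁ - y₂‖ := by
    intro x ρ hρ g hd hb y₁ h₁ y₂ h₂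
    refine Convex.norm_image_sub_le_of_norm_fderiv_le
      (fun y hy => hd.differentiableAt (isOpen_ball.mem_nhds (ball_subset_ball (by linarith) hy)))
      (fun y hy => ?_) (convex_ball x (5 * ρ)) h₂ h₁
    have hsub : ball y (4 * ρ) ⊆ ball x (9 * ρ) := by
      refine ball_subset_ball' ?_
      rw [mem_ball] at hy
      linarith [hy]
    have := fderiv_bound (by linarith : (0:ℝ) < 4 * ρ) (hd.mono hsub)
      (fun w hw => hb w (hsub hw))
    calc ‖fderiv ℂ g y‖ ≤ 2 * 1 / (4 * ρ) := this
      _ = 1 / (2 * ρ) := by field_simp; ring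
  -- existence of derivative limits
  have hf'ex : ∀ y ∈ G, ∃ L, Tendsto (fun k => fderiv ℂ (F k) y) (U : Filter ℕ) (nhds L) := by
    intro y hy
    obtain ⟨ρ, hρ, hsub, hev⟩ := hG y hy
    have hmem : ∀ᶠ k in (U : Filter ℕ),
        fderiv ℂ (F k) y ∈ closedBall (0 : V →L[ℂ] ℂ) (2 * 1 / (9 * ρ)) := by
      filter_upwards [hev] with k hk
      rw [mem_closedBall, dist_zero_right]
      exact fderiv_bound (by linarith) hk.1 hk.2
    obtain ⟨L, _, hL⟩ := (isCompact_closedBall (0 : V →L[ℂ] ℂ) _).ultrafilter_le_nhds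
      (U.map fun k => fderiv ℂ (F k) y) (le_principal_iff.mpr (mem_map.mpr hmem))
    exact ⟨L, hL⟩
  set f' : V → (V →L[ℂ] ℂ) := fun y =>
    if h : ∃ L, Tendsto (fun k => fderiv ℂ (F k) y) (U : Filter ℕ) (nhds L) then h.choose
    else 0 with hf'def
  have hf' : ∀ y ∈ G, Tendsto (fun k => fderiv ℂ (F k) y) (U : Filter ℕ) (nhds (f' y)) := by
    intro y hy
    have : f' y = (hf'ex y hy).choose := by
      simp only [hf'def, dif_pos (hf'ex y hy)]
    rw [this]
    exact (hf'ex y hy).choose_spec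
  intro x hx
  obtain ⟨ρ, hρ, hsub, hev⟩ := hG x hx
  -- pointwise convergence and Lipschitz bound for the limit function on ball x (5ρ)
  have hptw5 : ∀ y ∈ ball x (5 * ρ), Tendsto (fun k => F k y) (U : Filter ℕ) (nhds (f y)) :=
    fun y hy => hptw y (hsub (ball_subset_ball (by linarith) hy))
  have liplim : ∀ y₁ ∈ ball x (5 * ρ), ∀ y₂ ∈ ball x (5 * ρ),
      ‖f y₁ - f y₂‖ ≤ 1 / (2 * ρ) * ‖y₁ - y₂‖ := by
    intro y₁ h₁ y₂ h₂
    have htt : Tendsto (fun k => ‖F k y₁ - F k y₂‖) (U : Filter ℕ) (nhds ‖f y₁ - f y₂‖) :=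
      ((hptw5 y₁ h₁).sub (hptw5 y₂ h₂)).norm
    refine le_of_tendsto htt ?_
    filter_upwards [hev] with k hk
    exact lip x ρ hρ (F k) hk.1 hk.2 y₁ h₁ y₂ h₂
  -- uniform convergence of the functions on closedBall x (4ρ)
  have hunif : TendstoUniformlyOn F f (U : Filter ℕ) (closedBall x (4 * ρ)) := by
    rw [Metric.tendstoUniformlyOn_iff]
    intro ε hε
    have hδ : (0:ℝ) < min ρ (2 * ρ * (ε / 3)) := lt_min hρ (by positivity)
    set δ := min ρ (2 * ρ * (ε / 3)) with hδdef
    obtain ⟨t, hts, htfin, htcover⟩ := totallyBounded_iff_subset.mp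
      (isCompact_closedBall x (4 * ρ)).totallyBounded _ (dist_mem_uniformity hδ)
    have hcb5 : closedBall x (4 * ρ) ⊆ ball x (5 * ρ) :=
      closedBall_subset_ball (by linarith)
    have hnet : ∀ᶠ k in (U : Filter ℕ), ∀ i ∈ t, dist (f i) (F k i) < ε / 3 := by
      rw [eventually_all_finite htfin]
      intro i hi
      have hiG : i ∈ G := hsub (ball_subset_ball (by linarith) (hcb5 (hts hi)))
      have h3 := Metric.tendsto_nhds.mp (hptw i hiG) (ε / 3) (by positivity)
      filter_upwards [h3] with k hk
      rw [dist_comm]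
      exact hk
    filter_upwards [hev, hnet] with k hk hknet
    intro y hy
    obtain ⟨i, hit, hyi⟩ := mem_iUnion₂.mp (htcover hy)
    have hyi' : dist y i < δ := hyi
    have hy5 : y ∈ ball x (5 * ρ) := hcb5 hy
    have hi5 : i ∈ ball x (5 * ρ) := hcb5 (hts hit)
    have hb1 : dist (f y) (f i) ≤ ε / 3 := by
      rw [dist_eq_norm]
      calc ‖f y - f i‖ ≤ 1 / (2 * ρ) * ‖y - i‖ := liplim y hy5 i hi5
        _ ≤ 1 / (2 * ρ) * (2 * ρ * (ε / 3)) := by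
            refine mul_le_mul_of_nonneg_left ?_ (by positivity)
            rw [← dist_eq_norm]
            exact le_trans hyi'.le (min_le_right _ _)
        _ = ε / 3 := by field_simp
    have hb3 : dist (F k i) (F k y) ≤ ε / 3 := by
      rw [dist_eq_norm]
      calc ‖F k i - F k y‖ ≤ 1 / (2 * ρ) * ‖i - y‖ := lip x ρ hρ (F k) hk.1 hk.2 i hi5 y hy5
        _ ≤ 1 / (2 * ρ) * (2 * ρ * (ε / 3)) := by
            refine mul_le_mul_of_nonneg_left ?_ (by positivity)
            rw [← dist_eq_norm, dist_comm]
            exact le_trans hyi'.le (min_le_right _ _)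
        _ = ε / 3 := by field_simp
    calc dist (f y) (F k y) ≤ dist (f y) (f i) + dist (f i) (F k i) + dist (F k i) (F k y) :=
          dist_triangle4 _ _ _ _
      _ < ε := by
          have hmid := hknet i hit
          linarith
  -- uniform convergence of the derivatives on ball x ρ
  have hunif' : TendstoUniformlyOn (fun k => fderiv ℂ (F k)) f' (U : Filter ℕ) (ball x ρ) := by
    rw [Metric.tendstoUniformlyOn_iff]
    intro ε hε
    have hE : ∀ᶠ k in (U : Filter ℕ),
        (DifferentiableOn ℂ (F k) (ball x (9 * ρ)) ∧ ∀ y ∈ ball x (9 * ρ), ‖F k y‖ ≤ 1) ∧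
        ∀ y ∈ closedBall x (4 * ρ), dist (f y) (F k y) < ε * ρ / 4 := by
      refine hev.and ?_
      exact Metric.tendstoUniformlyOn_iff.mp hunif (ε * ρ / 4) (by positivity)
    filter_upwards [hE] with k hkE
    intro y hy
    have hyG : y ∈ G := hsub (ball_subset_ball (by linarith) hy)
    have hyball : ball y (2 * ρ) ⊆ closedBall x (4 * ρ) := by
      refine subset_trans (ball_subset_ball' ?_) (ball_subset_closedBall)
      rw [mem_ball] at hy
      linarith [hy]
    have hyball9 : ball y (2 * ρ) ⊆ ball x (9 * ρ) := by
      refine ball_subset_ball' ?_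
      rw [mem_ball] at hy
      linarith [hy]
    have key : ∀ᶠ j in (U : Filter ℕ), ‖fderiv ℂ (F k) y - fderiv ℂ (F j) y‖ ≤ ε / 2 := by
      filter_upwards [hE] with j hjE
      have hdk : DifferentiableOn ℂ (fun w => F k w - F j w) (ball y (2 * ρ)) :=
        ((hkE.1.1.mono hyball9).sub (hjE.1.1.mono hyball9))
      have hbkj : ∀ w ∈ ball y (2 * ρ), ‖F k w - F j w‖ ≤ ε * ρ / 2 := by
        intro w hw
        have h1 := hkE.2 w (hyball hw)
        have h2 := hjE.2 w (hyball hw)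
        calc ‖F k w - F j w‖ ≤ ‖F k w - f w‖ + ‖f w - F j w‖ := by
              have h4 : F k w - F j w = F k w - f w + (f w - F j w) := by ring
              rw [h4]
              exact norm_add_le _ _
          _ ≤ ε * ρ / 4 + ε * ρ / 4 := by
              rw [← dist_eq_norm, ← dist_eq_norm, dist_comm (F k w) (f w)]
              exact add_le_add h1.le h2.le
          _ = ε * ρ / 2 := by ring
      have hfd := fderiv_bound (by linarith : (0:ℝ) < 2 * ρ) hdk hbkj
      have heq : fderiv ℂ (fun w => F k w - F j w) y = fderiv ℂ (F k) y - fderiv ℂ (F j) y := by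
        apply fderiv_sub
        · exact (hkE.1.1.differentiableAt (isOpen_ball.mem_nhds (hyball9 (mem_ball_self (by linarith)))))
        · exact (hjE.1.1.differentiableAt (isOpen_ball.mem_nhds (hyball9 (mem_ball_self (by linarith)))))
      rw [heq] at hfd
      calc ‖fderiv ℂ (F k) y - fderiv ℂ (F j) y‖ ≤ 2 * (ε * ρ / 2) / (2 * ρ) := hfd
        _ = ε / 2 := by field_simp
    have hlimj : Tendsto (fun j => ‖fderiv ℂ (F k) y - fderiv ℂ (F j) y‖) (U : Filter ℕ)
        (nhds ‖fderiv ℂ (F k) y - f' y‖) :=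
      (tendsto_const_nhds.sub (hf' y hyG)).norm
    have hfin := le_of_tendsto hlimj key
    rw [dist_eq_norm, norm_sub_rev]
    calc ‖fderiv ℂ (F k) y - f' y‖ ≤ ε / 2 := hfin
      _ < ε := by linarith
  -- differentiability at x via modified sequence
  set Fmod : ℕ → V → ℂ := fun k =>
    if DifferentiableOn ℂ (F k) (ball x (9 * ρ)) then F k else fun _ => 0 with hFmod
  have hmodeq : ∀ᶠ k in (U : Filter ℕ), Fmod k = F k := by
    filter_upwards [hev] with k hk
    rw [hFmod]
    simp only [if_pos hk.1]
  have hfd : ∀ k, ∀ y ∈ ball x ρ, HasFDerivAt (Fmod k) (fderiv ℂ (Fmod k) y) y := by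
    intro k y hy
    by_cases h : DifferentiableOn ℂ (F k) (ball x (9 * ρ))
    · simp only [hFmod, if_pos h]
      exact (h.differentiableAt
        (isOpen_ball.mem_nhds (ball_subset_ball (by linarith) hy))).hasFDerivAt
    · simp only [hFmod, if_neg h]
      exact (differentiableAt_const (0:ℂ)).hasFDerivAt
  have hunif'' : TendstoLocallyUniformlyOn (fun k => fderiv ℂ (Fmod k)) f'
      (U : Filter ℕ) (ball x ρ) := by
    refine (hunif'.congr ?_).tendstoLocallyUniformlyOn
    filter_upwards [hmodeq] with k hk
    intro y _
    rw [hk]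
  have hfg : ∀ y ∈ ball x ρ, Tendsto (fun k => Fmod k y) (U : Filter ℕ) (nhds (f y)) := by
    intro y hy
    refine Tendsto.congr' ?_ (hptw y (hsub (ball_subset_ball (by linarith) hy)))
    filter_upwards [hmodeq] with k hk
    rw [hk]
  have hder : HasFDerivAt f (f' x) x :=
    hasFDerivAt_of_tendstoLocallyUniformlyOn isOpen_ball hunif'' hfd hfg (mem_ball_self hρ)
  exact hder.differentiableAt.differentiableWithinAt

lemma OrdGE_mono {f : V → ℂ} {a : V} {m m' : ℕ} (h : m ≤ m') (hO : OrdGE f a m') :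
    OrdGE f a m := by
  refine hO.trans ?_
  rw [isBigO_iff]
  refine ⟨1, ?_⟩
  filter_upwards [Metric.ball_mem_nhds a one_pos] with w hw
  rw [Metric.mem_ball, dist_eq_norm] at hw
  rw [Real.norm_eq_abs, Real.norm_eq_abs,
    _root_.abs_of_nonneg (pow_nonneg (norm_nonneg _) _),
    _root_.abs_of_nonneg (pow_nonneg (norm_nonneg _) _), one_mul]
  exact pow_le_pow_of_le_one (norm_nonneg _) hw.le h

lemma zero_mem_mFunSet (D : Set V) (q : V → ℕ) (z : V) :
    (0:ℝ) ∈ {r : ℝ | ∃ f : V → ℂ, DifferentiableOn ℂ f D ∧ MapsTo f D discE ∧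
      (∀ a ∈ D, OrdGE f a (q a)) ∧ r = ‖f z‖} :=
  ⟨fun _ => 0, differentiableOn_const 0, fun x _ => by simp [discE],
    fun a _ => isBigO_zero _ _, by simp⟩

lemma mFunSet_bddAbove (D : Set V) (q : V → ℕ) {z : V} (hz : z ∈ D) :
    BddAbove {r : ℝ | ∃ f : V → ℂ, DifferentiableOn ℂ f D ∧ MapsTo f D discE ∧
      (∀ a ∈ D, OrdGE f a (q a)) ∧ r = ‖f z‖} := by
  refine ⟨1, ?_⟩
  rintro r ⟨f, _, hm, _, rfl⟩
  exact le_of_lt (hm hz)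

lemma mFun_nonneg (D : Set V) (q : V → ℕ) {z : V} (hz : z ∈ D) : 0 ≤ mFun D q z :=
  le_csSup (mFunSet_bddAbove D q hz) (zero_mem_mFunSet D q z)

lemma mFun_le_one (D : Set V) (q : V → ℕ) {z : V} (hz : z ∈ D) : mFun D q z ≤ 1 := by
  refine csSup_le ⟨0, zero_mem_mFunSet D q z⟩ ?_
  rintro r ⟨f, _, hm, _, rfl⟩
  exact le_of_lt (hm hz)

lemma mFun_le_mFun {D D' : Set V} {q q' : V → ℕ} {z : V}
    (hDD : D ⊆ D') (hqq : ∀ a ∈ D, q a ≤ q' a) (hz : z ∈ D) :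
    mFun D' q' z ≤ mFun D q z := by
  refine csSup_le_csSup (mFunSet_bddAbove D q hz) ⟨0, zero_mem_mFunSet D' q' z⟩ ?_
  rintro r ⟨f, hd, hm, ho, rfl⟩
  exact ⟨f, hd.mono hDD, hm.mono_left hDD,
    fun a ha => OrdGE_mono (hqq a ha) (ho a (hDD ha)), rfl⟩

/-- if `G_k ↗ G` and `p_k ↗ p`, then `m_{G_k}(p_k,z) ↘ m_G(p,z)`. -/
theorem stmt_8 {n : ℕ} (G : Set (Fin n → ℂ)) (hG : IsDom G)
    (Gk : ℕ → Set (Fin n → ℂ)) (hGk : ∀ k, IsDom (Gk k))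
    (hincr : ∀ k, Gk k ⊆ Gk (k + 1)) (hunion : (⋃ k, Gk k) = G)
    (pk : ℕ → (Fin n → ℂ) → ℕ) (p : (Fin n → ℂ) → ℕ)
    (hpk : ∀ k, ∀ a ∈ Gk k, pk k a ≤ pk (k + 1) a)
    (hlim : ∀ a ∈ G, ∃ N, ∀ k ≥ N, a ∈ Gk k ∧ pk k a = p a)
    (z : Fin n → ℂ) (hz : z ∈ G) :
    (∀ k, z ∈ Gk k → mFun (Gk (k + 1)) (pk (k + 1)) z ≤ mFun (Gk k) (pk k) z) ∧
    Tendsto (fun k => mFun (Gk k) (pk k) z) atTop (nhds (mFun G p z)) := by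
  classical
  obtain ⟨hGo, hGconn⟩ := hG
  have hGkmono : ∀ {i j : ℕ}, i ≤ j → Gk i ⊆ Gk j := fun {i j} h =>
    monotone_nat_of_le_succ hincr h
  have hGksubG : ∀ k, Gk k ⊆ G := fun k x hx => hunion ▸ mem_iUnion.mpr ⟨k, hx⟩
  have hpkchain : ∀ k j, k ≤ j → ∀ a ∈ Gk k, pk k a ≤ pk j a := by
    intro k j hkj
    induction j, hkj using Nat.le_induction with
    | base => exact fun a _ => le_rfl
    | succ j hkj ih =>
        intro a ha
        exact le_trans (ih a ha) (hpk j a (hGkmono hkj ha))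
  have hpkp : ∀ k, ∀ a ∈ Gk k, pk k a ≤ p a := by
    intro k a ha
    obtain ⟨N, hN⟩ := hlim a (hGksubG k ha)
    rcases le_total k N with h | h
    · rw [← (hN N le_rfl).2]
      exact hpkchain k N h a ha
    · exact le_of_eq (hN k h).2
  have part1 : ∀ k, z ∈ Gk k →
      mFun (Gk (k + 1)) (pk (k + 1)) z ≤ mFun (Gk k) (pk k) z :=
    fun k hzk => mFun_le_mFun (hincr k) (hpk k) hzk
  refine ⟨part1, ?_⟩
  obtain ⟨N₀, hN₀⟩ := hlim z hz
  have hzk : ∀ j, z ∈ Gk (j + N₀) := fun j => (hN₀ _ (Nat.le_add_left _ _)).1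
  set L : ℝ := ⨅ j, mFun (Gk (j + N₀)) (pk (j + N₀)) z with hLdef
  have hanti : Antitone fun j => mFun (Gk (j + N₀)) (pk (j + N₀)) z := by
    refine antitone_nat_of_succ_le fun j => ?_
    have h1 := part1 (j + N₀) (hzk j)
    have h2 : j + 1 + N₀ = j + N₀ + 1 := by omega
    rw [h2]
    exact h1
  have hbddb : BddBelow (Set.range fun j => mFun (Gk (j + N₀)) (pk (j + N₀)) z) := by
    refine ⟨0, ?_⟩
    rintro r ⟨j, rfl⟩
    exact mFun_nonneg _ _ (hzk j)
  have htendsto' : Tendsto (fun j => mFun (Gk (j + N₀)) (pk (j + N₀)) z) atTop (nhds L) :=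
    tendsto_atTop_ciInf hanti hbddb
  have htendsto : Tendsto (fun k => mFun (Gk k) (pk k) z) atTop (nhds L) :=
    (tendsto_add_atTop_iff_nat N₀).mp htendsto'
  have hmL : mFun G p z ≤ L := by
    refine ge_of_tendsto htendsto ?_
    filter_upwards [eventually_ge_atTop N₀] with k hk
    exact mFun_le_mFun (hGksubG k) (hpkp k) (hN₀ k hk).1
  -- Now the hard direction : L ≤ mFun G p z
  have hPex : ∀ k, z ∈ Gk k → ∃ f : (Fin n → ℂ) → ℂ, DifferentiableOn ℂ f (Gk k) ∧
      MapsTo f (Gk k) discE ∧ (∀ a ∈ Gk k, OrdGE f a (pk k a)) ∧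
      mFun (Gk k) (pk k) z - 1 / (k + 1) ≤ ‖f z‖ := by
    intro k hzgk
    have hpos : (0:ℝ) < 1 / (k + 1) := by positivity
    have hlt : mFun (Gk k) (pk k) z - 1 / (k + 1) < mFun (Gk k) (pk k) z :=
      sub_lt_self _ hpos
    obtain ⟨r, hrm, hr⟩ := exists_lt_of_lt_csSup ⟨0, zero_mem_mFunSet (Gk k) (pk k) z⟩ hlt
    obtain ⟨f, hd, hm, ho, rfl⟩ := hrm
    exact ⟨f, hd, hm, ho, hr.le⟩
  set F : ℕ → (Fin n → ℂ) → ℂ := fun k =>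
    if h : z ∈ Gk k then (hPex k h).choose else fun _ => 0 with hFdef
  have hF : ∀ k (h : z ∈ Gk k), DifferentiableOn ℂ (F k) (Gk k) ∧
      MapsTo (F k) (Gk k) discE ∧ (∀ a ∈ Gk k, OrdGE (F k) a (pk k a)) ∧
      mFun (Gk k) (pk k) z - 1 / (k + 1) ≤ ‖F k z‖ := by
    intro k h
    have : F k = (hPex k h).choose := by simp only [hFdef, dif_pos h]
    rw [this]
    exact (hPex k h).choose_spec
  set U : Ultrafilter ℕ := Ultrafilter.of atTop with hUdef
  have hUle : (U : Filter ℕ) ≤ atTop := Ultrafilter.of_le atTop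
  have hUge : ∀ K : ℕ, ∀ᶠ k in (U : Filter ℕ), K ≤ k := fun K => hUle (eventually_ge_atTop K)
  have hcpt : ∀ K : Set (Fin n → ℂ), IsCompact K → K ⊆ G → ∃ k, K ⊆ Gk k := by
    intro K hK hKG
    obtain ⟨t, ht⟩ := hK.elim_finite_subcover Gk (fun k => (hGk k).1)
      (by rw [← hunion] at hKG; exact hKG)
    refine ⟨t.sup id, fun y hy => ?_⟩
    obtain ⟨i, hi, hyi⟩ := mem_iUnion₂.mp (ht hy)
    exact hGkmono (Finset.le_sup (f := id) hi) hyi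
  have hsetup : ∀ x ∈ G, ∃ ρ : ℝ, 0 < ρ ∧ Metric.ball x (9 * ρ) ⊆ G ∧
      ∃ K, ∀ k, K ≤ k → Metric.ball x (9 * ρ) ⊆ Gk k ∧ z ∈ Gk k := by
    intro x hx
    obtain ⟨ε, hε, hball⟩ := Metric.isOpen_iff.mp hGo x hx
    have h9 : Metric.closedBall x (9 * (ε / 10)) ⊆ Metric.ball x ε :=
      Metric.closedBall_subset_ball (by linarith)
    obtain ⟨K₁, hK₁⟩ := hcpt (Metric.closedBall x (9 * (ε / 10)))
      (isCompact_closedBall _ _) (h9.trans hball)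
    refine ⟨ε / 10, by positivity,
      (Metric.ball_subset_closedBall.trans h9).trans hball, max K₁ N₀, fun k hk => ?_⟩
    constructor
    · exact Metric.ball_subset_closedBall.trans
        (hK₁.trans (hGkmono (le_trans (le_max_left _ _) hk)))
    · exact (hN₀ k (le_trans (le_max_right _ _) hk)).1
  have habs : ∀ (w : ℂ), w ∈ discE → ‖w‖ ≤ 1 := by
    intro w hw
    exact le_of_lt hw
  have hev : ∀ x ∈ G, ∃ ρ : ℝ, 0 < ρ ∧ Metric.ball x (9 * ρ) ⊆ G ∧
      ∀ᶠ k in (U : Filter ℕ), DifferentiableOn ℂ (F k) (Metric.ball x (9 * ρ)) ∧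
        ∀ y ∈ Metric.ball x (9 * ρ), ‖F k y‖ ≤ 1 := by
    intro x hx
    obtain ⟨ρ, hρ, hsubG, K, hK⟩ := hsetup x hx
    refine ⟨ρ, hρ, hsubG, ?_⟩
    filter_upwards [hUge K] with k hk
    obtain ⟨hsubk, hzkk⟩ := hK k hk
    obtain ⟨hd, hm, _, _⟩ := hF k hzkk
    exact ⟨hd.mono hsubk, fun y hy => habs _ (hm (hsubk hy))⟩
  have hflimex : ∀ x, x ∈ G → ∃ c : ℂ, Tendsto (fun k => F k x) (U : Filter ℕ) (nhds c) := by
    intro x hx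
    obtain ⟨N₁, hN₁⟩ := hlim x hx
    have hmem : ∀ᶠ k in (U : Filter ℕ), F k x ∈ Metric.closedBall (0:ℂ) 1 := by
      filter_upwards [hUge (max N₁ N₀)] with k hk
      obtain ⟨_, hm, _, _⟩ := hF k (hN₀ k (le_trans (le_max_right _ _) hk)).1
      rw [Metric.mem_closedBall, dist_zero_right]
      exact habs _ (hm (hN₁ k (le_trans (le_max_left _ _) hk)).1)
    obtain ⟨c, _, hc⟩ := (isCompact_closedBall (0:ℂ) 1).ultrafilter_le_nhds
      (U.map fun k => F k x) (le_principal_iff.mpr (mem_map.mpr hmem))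
    exact ⟨c, hc⟩
  set f : (Fin n → ℂ) → ℂ := fun x => if h : x ∈ G then (hflimex x h).choose else 0 with hfdef
  have hfl : ∀ x, x ∈ G → Tendsto (fun k => F k x) (U : Filter ℕ) (nhds (f x)) := by
    intro x hx
    have : f x = (hflimex x hx).choose := by simp only [hfdef, dif_pos hx]
    rw [this]
    exact (hflimex x hx).choose_spec
  have hdiffG : DifferentiableOn ℂ f G := keyNF hev hfl
  have hfb : ∀ x ∈ G, ‖f x‖ ≤ 1 := by
    intro x hx
    obtain ⟨N₁, hN₁⟩ := hlim x hx
    refine le_of_tendsto (hfl x hx).norm ?_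
    filter_upwards [hUge (max N₁ N₀)] with k hk
    obtain ⟨_, hm, _, _⟩ := hF k (hN₀ k (le_trans (le_max_right _ _) hk)).1
    exact habs _ (hm (hN₁ k (le_trans (le_max_left _ _) hk)).1)
  have hOrd : ∀ a ∈ G, OrdGE f a (p a) := by
    intro a ha
    obtain ⟨ρ, hρ, hsubG, K, hK⟩ := hsetup a ha
    obtain ⟨N₁, hN₁⟩ := hlim a ha
    have hq : ∀ w ∈ Metric.ball a (9 * ρ), ‖f w‖ ≤ 1 * (‖w - a‖ / (9 * ρ)) ^ (p a) := by
      intro w hw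
      refine le_of_tendsto (hfl w (hsubG hw)).norm ?_
      filter_upwards [hUge (max K N₁)] with k hk
      obtain ⟨hsubk, hzkk⟩ := hK k (le_trans (le_max_left _ _) hk)
      obtain ⟨hd, hm, ho, _⟩ := hF k hzkk
      have hak := (hN₁ k (le_trans (le_max_right _ _) hk)).1
      have hOk : OrdGE (F k) a (p a) := by
        rw [← (hN₁ k (le_trans (le_max_right _ _) hk)).2]
        exact ho a hak
      exact schwarz_multi (by linarith) zero_le_one (hd.mono hsubk)
        (fun y hy => habs _ (hm (hsubk hy))) hOk w hw
    show f =O[nhds a] fun w => ‖w - a‖ ^ (p a)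
    rw [isBigO_iff]
    refine ⟨(1 / (9 * ρ)) ^ (p a), ?_⟩
    filter_upwards [Metric.ball_mem_nhds a (by linarith : (0:ℝ) < 9 * ρ)] with w hw
    have h1 := hq w hw
    rw [one_mul, div_pow] at h1
    rw [Real.norm_eq_abs, _root_.abs_of_nonneg (pow_nonneg (norm_nonneg _) _)]
    calc ‖f w‖ ≤ ‖w - a‖ ^ p a / (9 * ρ) ^ p a := h1
      _ = (1 / (9 * ρ)) ^ p a * ‖w - a‖ ^ p a := by
          rw [div_pow, one_pow]
          ring
  have hfzL : L ≤ ‖f z‖ := by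
    have h1 : Tendsto (fun k : ℕ => mFun (Gk k) (pk k) z - 1 / (k + 1 : ℝ)) atTop
        (nhds L) := by
      have := htendsto.sub tendsto_one_div_add_atTop_nhds_zero_nat
      simpa using this
    have h2 : Tendsto (fun k => ‖F k z‖) (U : Filter ℕ)
        (nhds (‖f z‖)) := by
      have := (hfl z hz).norm
      simpa using this
    refine le_of_tendsto_of_tendsto (h1.mono_left hUle) h2 ?_
    filter_upwards [hUge N₀] with k hk
    exact (hF k (hN₀ k hk).1).2.2.2
  have hLle : L ≤ mFun G p z := by
    by_cases hp0 : ∀ b ∈ G, p b = 0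
    · -- constants show mFun G p z = 1
      have hclem : ∀ c : ℝ, 0 ≤ c → c < 1 → c ≤ mFun G p z := by
        intro c h0 h1
        refine le_csSup (mFunSet_bddAbove G p hz) ?_
        refine ⟨fun _ => (c : ℂ), differentiableOn_const _, ?_, ?_, ?_⟩
        · intro x _
          show ‖(c : ℂ)‖ < 1
          rwa [Complex.norm_real, Real.norm_of_nonneg h0]
        · intro a haG
          rw [hp0 a haG]
          show (fun _ => (c:ℂ)) =O[nhds a] fun w => ‖w - a‖ ^ 0
          simp only [pow_zero]
          exact isBigO_const_const _ one_ne_zero _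
        · rw [Complex.norm_real, Real.norm_of_nonneg h0]
      have hone : (1:ℝ) ≤ mFun G p z := by
        refine le_of_forall_lt fun c hc => ?_
        rcases le_or_gt 0 c with h0 | h0
        · have h2 : c < (c + 1) / 2 := by linarith
          exact lt_of_lt_of_le h2 (hclem ((c + 1) / 2) (by linarith) (by linarith))
        · exact lt_of_lt_of_le h0 (mFun_nonneg G p hz)
      have hL1 : L ≤ 1 := by
        refine le_of_tendsto htendsto ?_
        filter_upwards [eventually_ge_atTop N₀] with k hk
        exact mFun_le_one _ _ (hN₀ k hk).1
      linarith
    · push_neg at hp0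
      obtain ⟨b, hbG, hpb⟩ := hp0
      have hfb0 : f b = 0 := by
        obtain ⟨C, hC⟩ := isBigO_iff.mp (hOrd b hbG)
        have h0 := hC.self_of_nhds
        simp only [sub_self, norm_zero, zero_pow hpb, Real.norm_eq_abs, abs_zero,
          mul_zero] at h0
        exact norm_le_zero_iff.mp h0
      have hmaps : MapsTo f G discE := by
        intro y hy
        show ‖f y‖ < 1
        by_contra hge
        push_neg at hge
        have heq1 : ‖f y‖ = 1 := by
          exact le_antisymm (hfb y hy) hge
        have hmax : IsMaxOn (norm ∘ f) G y := by
          intro w hw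
          show ‖f w‖ ≤ ‖f y‖
          rw [heq1]
          exact hfb w hw
        have hcst := Complex.norm_eqOn_of_isPreconnected_of_isMaxOn
          hGconn.isPreconnected hGo hdiffG hy hmax
        have hb1 := hcst hbG
        simp only [Function.comp_apply, Function.const_apply, hfb0, norm_zero] at hb1
        rw [heq1] at hb1
        exact one_ne_zero hb1.symm
      refine le_trans hfzL (le_csSup (mFunSet_bddAbove G p hz) ?_)
      exact ⟨f, hdiffG, hmaps, hOrd, rfl⟩
  have : L = mFun G p z := le_antisymm hLle hmL
  rwa [this] at htendsto
end
end

section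
/- For every function p : E → ℝ₊ and every λ ∈ E, d_E^min(p,λ) = ∏_{μ∈E} [m_E(μ,λ)]^{p(μ)}, where the (possibly infinite) product of numbers in [0,1] is defined as the infimum of its finite subproducts. -/
open Complex Set Filter Asymptotics
open scoped ENNReal

noncomputable section

variable {V W : Type*} [NormedAddCommGroup V] [NormedSpace ℂ V]
  [NormedAddCommGroup W] [NormedSpace ℂ W]

open Metric

def mb (b z : ℂ) : ℂ := (z - b) / (1 - (starRingEnd ℂ) b * z)

lemma isOpen_discE : IsOpen discE :=
  isOpen_lt (continuous_norm) continuous_const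

lemma key_normSq (a z : ℂ) :
    Complex.normSq (1 - (starRingEnd ℂ) a * z)
      = Complex.normSq (z - a) + (1 - Complex.normSq a) * (1 - Complex.normSq z) := by
  simp only [Complex.normSq_apply, Complex.sub_re, Complex.sub_im, Complex.mul_re,
    Complex.mul_im, Complex.one_re, Complex.one_im, Complex.conj_re, Complex.conj_im]
  ring

lemma normSq_lt_one {a : ℂ} (ha : a ∈ discE) : Complex.normSq a < 1 := by
  have := ha
  rw [discE, mem_setOf_eq] at this
  nlinarith [Complex.sq_norm a, norm_nonneg a]

lemma denom_ne_zero {a z : ℂ} (ha : a ∈ discE) (hz : z ∈ discE) :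
    (1 : ℂ) - (starRingEnd ℂ) a * z ≠ 0 := by
  intro h0
  rw [sub_eq_zero] at h0
  have h : ‖(starRingEnd ℂ) a * z‖ < 1 := by
    rw [norm_mul, Complex.norm_conj]
    calc ‖a‖ * ‖z‖ ≤ ‖a‖ * 1 :=
          mul_le_mul_of_nonneg_left (le_of_lt hz) (norm_nonneg a)
      _ = ‖a‖ := mul_one _
      _ < 1 := ha
  rw [← h0] at h
  simp at h

lemma normSq_num_lt {a z : ℂ} (ha : a ∈ discE) (hz : z ∈ discE) :
    Complex.normSq (z - a) < Complex.normSq (1 - (starRingEnd ℂ) a * z) := by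
  rw [key_normSq]
  nlinarith [normSq_lt_one ha, normSq_lt_one hz]

lemma abs_lt_abs_of_normSq_lt {x y : ℂ} (h : Complex.normSq x < Complex.normSq y) :
    ‖x‖ < ‖y‖ := by
  rw [Complex.norm_def, Complex.norm_def]
  exact Real.sqrt_lt_sqrt (Complex.normSq_nonneg x) h

lemma abs_mb_lt_one {a z : ℂ} (ha : a ∈ discE) (hz : z ∈ discE) :
    ‖mb a z‖ < 1 := by
  have hd := denom_ne_zero ha hz
  have h0 : 0 < ‖1 - (starRingEnd ℂ) a * z‖ := by
    simpa [norm_pos_iff] using hd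
  rw [mb, norm_div, div_lt_one h0]
  exact abs_lt_abs_of_normSq_lt (normSq_num_lt ha hz)

lemma mE_eq_abs_mb (a z : ℂ) : mE a z = ‖mb a z‖ := rfl

lemma mE_symm (a z : ℂ) : mE a z = mE z a := by
  rw [mE, mE, norm_div, norm_div]
  congr 1
  · exact norm_sub_rev z a
  · have h : (starRingEnd ℂ) (1 - (starRingEnd ℂ) z * a) = 1 - (starRingEnd ℂ) a * z := by
      rw [map_sub, map_one, map_mul]
      simp [mul_comm]
    rw [← Complex.norm_conj (1 - (starRingEnd ℂ) z * a), h]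

lemma mE_nonneg (a z : ℂ) : 0 ≤ mE a z := norm_nonneg _

lemma mE_lt_one {a z : ℂ} (ha : a ∈ discE) (hz : z ∈ discE) : mE a z < 1 :=
  abs_mb_lt_one ha hz

lemma mE_pos {a z : ℂ} (ha : a ∈ discE) (hz : z ∈ discE) (hne : z ≠ a) : 0 < mE a z := by
  rw [mE]
  apply norm_pos_iff.mpr
  exact div_ne_zero (sub_ne_zero.2 hne) (denom_ne_zero ha hz)

lemma mapsTo_mb {b : ℂ} (hb : b ∈ discE) : MapsTo (mb b) discE discE :=
  fun z hz => abs_mb_lt_one hb hz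

lemma mb_self {b : ℂ} : mb b b = 0 := by simp [mb]

lemma diffOn_mb {b : ℂ} (hb : b ∈ discE) : DifferentiableOn ℂ (mb b) discE := by
  apply DifferentiableOn.div
  · exact (differentiable_id.sub_const b).differentiableOn
  · exact (differentiable_const _ |>.sub ((differentiable_const _).mul differentiable_id)).differentiableOn
  · exact fun z hz => denom_ne_zero hb hz

/-- the inverse Möbius map. -/
lemma mb_mb {b : ℂ} (hb : b ∈ discE) {z : ℂ} (hz : z ∈ discE) :
    mb b (mb (-b) z) = z := by
  have h1 : (1 : ℂ) - (starRingEnd ℂ) (-b) * z ≠ 0 := denom_ne_zero (by simpa [discE] using hb) hz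
  have h2 : (1 : ℂ) - (starRingEnd ℂ) b * b ≠ 0 := by
    intro h; rw [sub_eq_zero] at h
    have h3 : ‖(starRingEnd ℂ) b * b‖ < 1 := by
      rw [norm_mul, Complex.norm_conj]
      nlinarith [norm_nonneg b, show ‖b‖ < 1 from hb]
    rw [← h] at h3; simp at h3
  have h3 : (1 : ℂ) - (starRingEnd ℂ) b * ((z - -b)/(1 - (starRingEnd ℂ) (-b) * z)) ≠ 0 := by
    have := denom_ne_zero hb (abs_mb_lt_one (show -b ∈ discE by simpa [discE] using hb) hz)
    simpa [mb] using this
  have h1' : (1 : ℂ) + (starRingEnd ℂ) b * z ≠ 0 := by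
    simpa [map_neg, sub_neg_eq_add] using h1
  have hwmem : mb (-b) z ∈ discE :=
    abs_mb_lt_one (show -b ∈ discE by simpa [discE] using hb) hz
  rw [show mb b (mb (-b) z) = ((mb (-b) z) - b)/(1 - (starRingEnd ℂ) b * mb (-b) z) from rfl]
  rw [div_eq_iff (denom_ne_zero hb hwmem)]
  simp only [mb, map_neg, sub_neg_eq_add, neg_mul]
  have h1'' : (1 : ℂ) + z * (starRingEnd ℂ) b ≠ 0 := by rwa [mul_comm] at h1'
  field_simp
  ring

lemma blaschke_step {g : ℂ → ℂ} (hd : DifferentiableOn ℂ g discE)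
    (hb1 : ∀ z ∈ discE, ‖g z‖ ≤ 1) {b : ℂ} (hb : b ∈ discE) (hgb : g b = 0) :
    ∃ g₁ : ℂ → ℂ, DifferentiableOn ℂ g₁ discE ∧ (∀ z ∈ discE, ‖g₁ z‖ ≤ 1) ∧
      ∀ z ∈ discE, g z = g₁ z * mb b z := by
  set g₁ : ℂ → ℂ := fun z => dslope g b z * (1 - (starRingEnd ℂ) b * z) with hg₁
  have hd₁ : DifferentiableOn ℂ g₁ discE := by
    apply DifferentiableOn.mul
    · exact (Complex.differentiableOn_dslope (isOpen_discE.mem_nhds hb)).mpr hd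
    · exact (differentiable_const (1:ℂ) |>.sub
        ((differentiable_const _).mul differentiable_id)).differentiableOn
  have habs : ∀ w ∈ discE, w ≠ b →
      ‖g₁ w‖ * ‖w - b‖ = ‖g w‖ * ‖1 - (starRingEnd ℂ) b * w‖ := by
    intro w hw hwb
    have : g₁ w = g w / (w - b) * (1 - (starRingEnd ℂ) b * w) := by
      rw [hg₁]; simp only
      rw [dslope_of_ne _ hwb, slope_def_field, hgb, sub_zero]
    rw [this, norm_mul, norm_div]
    have h1 : ‖w - b‖ ≠ 0 := by
      simpa [sub_eq_zero] using hwb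
    field_simp
  have hfac : ∀ z ∈ discE, g z = g₁ z * mb b z := by
    intro z hz
    rcases eq_or_ne z b with rfl | hzb
    · simp [hgb, mb]
    · have : g₁ z = g z / (z - b) * (1 - (starRingEnd ℂ) b * z) := by
        rw [hg₁]; simp only
        rw [dslope_of_ne _ hzb, slope_def_field, hgb, sub_zero]
      rw [this, mb]
      have h1 : z - b ≠ 0 := sub_ne_zero.2 hzb
      have h2 := denom_ne_zero hb hz
      field_simp
      rw [mul_div_assoc, div_self (by rwa [mul_comm] at h2), mul_one]
  refine ⟨g₁, hd₁, ?_, hfac⟩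
  -- the bound
  intro z hz
  set m : ℝ := max (‖z‖) (‖b‖) with hm
  have hm1 : m < 1 := max_lt hz hb
  have hm0 : 0 ≤ m := le_trans (norm_nonneg z) (le_max_left _ _)
  set F : ℝ → ℝ := fun r => 1 + (1 - Complex.normSq b) * (1 - r^2) / (r - ‖b‖)^2 with hF
  have claimA : ∀ r ∈ Ioo m 1, (‖g₁ z‖)^2 ≤ F r := by
    intro r hr
    have hrm : m < r := hr.1
    have hr1 : r < 1 := hr.2
    have hr0 : 0 < r := lt_of_le_of_lt hm0 hrm
    have hbr : ‖b‖ < r := lt_of_le_of_lt (le_max_right _ _) hrm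
    have hFr0 : 0 ≤ F r := by
      rw [hF]
      have := normSq_lt_one hb
      have : (0:ℝ) ≤ (1 - Complex.normSq b) * (1 - r^2) / (r - ‖b‖)^2 := by
        apply div_nonneg
        · apply mul_nonneg <;> nlinarith
        · positivity
      linarith
    set C : ℝ := Real.sqrt (F r) with hC
    have hsphere : ∀ w ∈ sphere (0:ℂ) r, ‖g₁ w‖ ≤ C := by
      intro w hw
      have hwr : ‖w‖ = r := by
        simpa [Complex.dist_eq] using hw
      have hwE : w ∈ discE := by
        show ‖w‖ < 1; rw [hwr]; exact hr1
      have hwb : w ≠ b := by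
        intro h; rw [h] at hwr; rw [hwr] at hbr; exact lt_irrefl _ hbr
      have hnum := habs w hwE hwb
      have hwb0 : ‖w - b‖ ≠ 0 := by simpa [sub_eq_zero] using hwb
      have hwbpos : 0 < ‖w - b‖ := lt_of_le_of_ne (norm_nonneg _) (Ne.symm hwb0)
      have hlow : r - ‖b‖ ≤ ‖w - b‖ := by
        have := norm_sub_norm_le w b
        simpa [hwr] using this
      show ‖g₁ w‖ ≤ Real.sqrt (F r)
      rw [Real.le_sqrt (norm_nonneg _) hFr0]
      have hsq : (‖g₁ w‖)^2 * Complex.normSq (w - b)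
          = (‖g w‖)^2 * Complex.normSq (1 - (starRingEnd ℂ) b * w) := by
        have h2 := congrArg (fun x => x^2) hnum
        simp only [mul_pow] at h2
        rw [← Complex.sq_norm (w - b), ← Complex.sq_norm (1 - (starRingEnd ℂ) b * w)]
        exact h2
      have hg1 : (‖g w‖)^2 ≤ 1 := by
        have := hb1 w hwE
        nlinarith [norm_nonneg (g w)]
      have hkey := key_normSq b w
      have hnw : Complex.normSq w = r^2 := by
        rw [← Complex.sq_norm, hwr]
      have hlow2 : (r - ‖b‖)^2 ≤ Complex.normSq (w - b) := by
        rw [← Complex.sq_norm]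
        apply pow_le_pow_left₀ (by linarith) hlow
      have hpos2 : (0:ℝ) < Complex.normSq (w - b) := by
        rw [← Complex.sq_norm]; positivity
      have hnb1 : Complex.normSq b < 1 := normSq_lt_one hb
      -- abs(g₁ w)^2 ≤ normSq(1 - conj b w)/normSq(w-b) = 1 + (1-nb)(1-r²)/normSq(w-b) ≤ F r
      rw [hF]
      have e1 : (‖g₁ w‖)^2 ≤ Complex.normSq (1 - (starRingEnd ℂ) b * w) / Complex.normSq (w - b) := by
        rw [le_div_iff₀ hpos2]
        nlinarith [Complex.normSq_nonneg (1 - (starRingEnd ℂ) b * w)]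
      have e2 : Complex.normSq (1 - (starRingEnd ℂ) b * w) / Complex.normSq (w - b)
          = 1 + (1 - Complex.normSq b) * (1 - r^2) / Complex.normSq (w - b) := by
        rw [hkey, hnw]
        field_simp
      have e3 : (1 - Complex.normSq b) * (1 - r^2) / Complex.normSq (w - b)
          ≤ (1 - Complex.normSq b) * (1 - r^2) / (r - ‖b‖)^2 := by
        have hnn : (0:ℝ) ≤ (1 - Complex.normSq b) * (1 - r^2) := by
          apply mul_nonneg
          · linarith
          · nlinarith
        gcongr
      rw [e2] at e1
      calc (‖g₁ w‖)^2 ≤ 1 + (1 - Complex.normSq b) * (1 - r^2) / Complex.normSq (w - b) := e1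
        _ ≤ 1 + (1 - Complex.normSq b) * (1 - r^2) / (r - ‖b‖)^2 := by linarith
    -- maximum modulus on ball 0 r
    have hball : closedBall (0:ℂ) r ⊆ discE := by
      intro w hw
      have : ‖w‖ ≤ r := by simpa [Complex.dist_eq] using hw
      show ‖w‖ < 1
      linarith
    have hdc : DiffContOnCl ℂ g₁ (ball (0:ℂ) r) :=
      (hd₁.mono (closure_ball_subset_closedBall.trans hball)).diffContOnCl
    have hzball : z ∈ closure (ball (0:ℂ) r) := by
      apply subset_closure
      have : ‖z‖ < r := lt_of_le_of_lt (le_max_left _ _) hrm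
      simpa [mem_ball, Complex.dist_eq] using this
    have hmax : ‖g₁ z‖ ≤ C := by
      apply Complex.norm_le_of_forall_mem_frontier_norm_le isBounded_ball hdc _ hzball
      intro w hw
      rw [frontier_ball _ (ne_of_gt hr0)] at hw
      simpa using hsphere w hw
    have habsz : ‖g₁ z‖ ≤ C := by simpa using hmax
    calc (‖g₁ z‖)^2 ≤ C^2 := by
          apply pow_le_pow_left₀ (norm_nonneg _) habsz
      _ = F r := Real.sq_sqrt hFr0
  -- now pass to the limit r → 1⁻
  have hFtend : Tendsto F (nhdsWithin (1:ℝ) (Iio 1)) (nhds 1) := by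
    have hb1' : ‖b‖ < 1 := hb
    have hcont : ContinuousAt F 1 := by
      apply ContinuousAt.add continuousAt_const
      apply ContinuousAt.div
      · fun_prop
      · fun_prop
      · show ((1:ℝ) - ‖b‖)^2 ≠ 0
        exact pow_ne_zero 2 (by linarith)
    have hF1 : F 1 = 1 := by rw [hF]; simp
    have h := hcont.continuousWithinAt.tendsto (s := Iio (1:ℝ))
    rwa [hF1] at h
  have hev : ∀ᶠ r in nhdsWithin (1:ℝ) (Iio 1), (‖g₁ z‖)^2 ≤ F r := by
    apply Filter.eventually_of_mem (Ioo_mem_nhdsLT_of_mem (⟨hm1, le_refl 1⟩ : (1:ℝ) ∈ Ioc m 1))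
    exact claimA
  have hsq : (‖g₁ z‖)^2 ≤ 1 := ge_of_tendsto hFtend hev
  nlinarith [norm_nonneg (g₁ z)]

lemma mE_nonneg' (a z : ℂ) : 0 ≤ mE a z := norm_nonneg _

lemma mb_ne_zero {b z : ℂ} (hb : b ∈ discE) (hz : z ∈ discE) (hne : z ≠ b) :
    mb b z ≠ 0 :=
  div_ne_zero (sub_ne_zero.2 hne) (denom_ne_zero hb hz)

/-- Iterated Blaschke bound: if `g` is holomorphic on `E`, `|g| ≤ 1`, and `g` vanishes on a
finite set `S ⊆ E`, then `|g z| ≤ ∏_{a ∈ S} mE a z`. -/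
lemma blaschke_bound (S : Finset ℂ) : ∀ {g : ℂ → ℂ}, ↑S ⊆ discE →
    DifferentiableOn ℂ g discE → (∀ z ∈ discE, ‖g z‖ ≤ 1) →
    (∀ a ∈ S, g a = 0) → ∀ z ∈ discE, ‖g z‖ ≤ ∏ a ∈ S, mE a z := by
  classical
  induction S using Finset.induction_on with
  | empty => intro g _ _ hb1 _ z hz; simpa using hb1 z hz
  | @insert b S' hbS' ih =>
    intro g hsub hd hb1 hvan z hz
    have hbE : b ∈ discE := hsub (by simp)
    have hS'E : ↑S' ⊆ discE := fun a ha => hsub (by simp [ha])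
    obtain ⟨g₁, hd₁, hb₁, hfac⟩ := blaschke_step hd hb1 hbE (hvan b (by simp))
    have hvan₁ : ∀ a ∈ S', g₁ a = 0 := by
      intro a ha
      have haE : a ∈ discE := hS'E ha
      have hab : a ≠ b := fun h => hbS' (h ▸ ha)
      have h0 : g₁ a * mb b a = 0 := by
        rw [← hfac a haE]; exact hvan a (by simp [ha])
      rcases mul_eq_zero.mp h0 with h | h
      · exact h
      · exact absurd h (mb_ne_zero hbE haE hab)
    have ihz := ih hS'E hd₁ hb₁ hvan₁ z hz
    rw [hfac z hz, norm_mul, Finset.prod_insert hbS']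
    calc ‖g₁ z‖ * ‖mb b z‖
        ≤ (∏ a ∈ S', mE a z) * ‖mb b z‖ :=
          mul_le_mul_of_nonneg_right ihz (norm_nonneg _)
      _ = mE b z * ∏ a ∈ S', mE a z := by rw [mE_eq_abs_mb]; ring

/-- Multi-point Schwarz–Pick: if `f : E → E` is holomorphic with `f lam = 0` and
`f a = μ` for all `a` in a finite set `D ⊆ E`, then `|μ| ≤ ∏_{a ∈ D} mE a lam`. -/
lemma schwarz_prod {f : ℂ → ℂ} (hd : DifferentiableOn ℂ f discE)
    (hm : MapsTo f discE discE) {lam : ℂ} (hlam : lam ∈ discE) (hflam : f lam = 0)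
    {μ : ℂ} (hμ : μ ∈ discE) (D : Finset ℂ) (hD : ↑D ⊆ discE)
    (hval : ∀ a ∈ D, f a = μ) : ‖μ‖ ≤ ∏ a ∈ D, mE a lam := by
  set g : ℂ → ℂ := fun z => mb μ (f z) with hg
  have hdg : DifferentiableOn ℂ g discE := (diffOn_mb hμ).comp hd hm
  have hbg : ∀ z ∈ discE, ‖g z‖ ≤ 1 := fun z hz =>
    le_of_lt (abs_mb_lt_one hμ (hm hz))
  have hvg : ∀ a ∈ D, g a = 0 := by
    intro a ha
    rw [hg]; simp only
    rw [hval a ha, mb_self]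
  have := blaschke_bound D hD hdg hbg hvg lam hlam
  have hglam : ‖g lam‖ = ‖μ‖ := by
    rw [hg]; simp only
    rw [hflam, mb]
    simp
  rwa [hglam] at this

section MainProof

variable {p : ℂ → ℝ}

lemma minTerm_nonneg (p : ℂ → ℝ) (f : ℂ → ℂ) (μ : ℂ) : 0 ≤ minTerm discE p f μ := by
  rw [minTerm]
  split_ifs
  · exact le_refl 0
  · exact Real.rpow_nonneg (norm_nonneg μ) _

lemma infProd_le {A : Set ℂ} {h : ℂ → ℝ} (hh : ∀ a, 0 ≤ h a) {B : Finset ℂ}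
    (hB : ↑B ⊆ A) : infProd A h ≤ ∏ a ∈ B, h a := by
  apply csInf_le
  · exact ⟨0, fun r ⟨B', _, hr⟩ => hr ▸ Finset.prod_nonneg fun a _ => hh a⟩
  · exact ⟨B, hB, rfl⟩

lemma infProd_le_one {A : Set ℂ} {h : ℂ → ℝ} (hh : ∀ a, 0 ≤ h a) : infProd A h ≤ 1 := by
  have := infProd_le (A := A) hh (B := (∅ : Finset ℂ)) (by simp)
  simpa using this

lemma infProd_nonneg {A : Set ℂ} {h : ℂ → ℝ} (hh : ∀ a, 0 ≤ h a) : 0 ≤ infProd A h := by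
  apply le_csInf
  · exact ⟨1, (∅ : Finset ℂ), by simp, by simp⟩
  rintro r ⟨B, _, rfl⟩
  exact Finset.prod_nonneg fun a _ => hh a

/-- Part 2: upper estimate for any competitor `f`. -/
lemma dMin_part2 (hp : ∀ a, 0 ≤ p a) {lam : ℂ} (hlam : lam ∈ discE)
    {f : ℂ → ℂ} (hd : DifferentiableOn ℂ f discE) (hm : MapsTo f discE discE)
    (hflam : f lam = 0) (B : Finset ℂ) (hB : ↑B ⊆ discE) :
    infProd (f '' discE) (minTerm discE p f) ≤ ∏ a ∈ B, mE a lam ^ p a := by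
  classical
  have hmtnn : ∀ μ, 0 ≤ minTerm discE p f μ := minTerm_nonneg p f
  have hprod_nn : (0:ℝ) ≤ ∏ a ∈ B, mE a lam ^ p a :=
    Finset.prod_nonneg fun a _ => Real.rpow_nonneg (mE_nonneg' a lam) _
  by_cases hcase : ∃ a ∈ discE, f a = 0 ∧ p a ≠ 0
  · obtain ⟨a, haE, hfa, hpa⟩ := hcase
    have hmem : a ∈ {b ∈ discE | f b = (0:ℂ)} := ⟨haE, hfa⟩
    have hle : ENNReal.ofReal (p a) ≤ fiberSup discE p f 0 :=
      le_biSup (fun b => ENNReal.ofReal (p b)) hmem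
    have hmt0 : minTerm discE p f 0 = 0 := by
      rw [minTerm]
      split_ifs with h
      · rfl
      · have hpos : 0 < (fiberSup discE p f 0).toReal := by
          apply ENNReal.toReal_pos _ h
          intro h0
          rw [h0, le_zero_iff] at hle
          exact hpa (by
            have := ENNReal.ofReal_eq_zero.mp hle
            linarith [hp a, this])
        rw [norm_zero, Real.zero_rpow (ne_of_gt hpos)]
    have h0img : (0:ℂ) ∈ f '' discE := ⟨a, haE, hfa⟩
    have : infProd (f '' discE) (minTerm discE p f) ≤ ∏ μ ∈ ({0} : Finset ℂ), minTerm discE p f μ :=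
      infProd_le hmtnn (by simpa using h0img)
    rw [Finset.prod_singleton, hmt0] at this
    linarith
  · push_neg at hcase
    set B' : Finset ℂ := B.filter (fun a => f a ≠ 0) with hB'
    set C : Finset ℂ := B'.image f with hC
    have hB'sub : ↑B' ⊆ discE := fun a ha => hB (Finset.mem_of_mem_filter a ha)
    have hCsub : ↑C ⊆ f '' discE := by
      intro μ hμ
      obtain ⟨a, ha, rfl⟩ := Finset.mem_image.mp hμ
      exact ⟨a, hB'sub ha, rfl⟩
    have step1 : infProd (f '' discE) (minTerm discE p f) ≤ ∏ μ ∈ C, minTerm discE p f μ :=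
      infProd_le hmtnn hCsub
    have step2 : ∏ μ ∈ C, minTerm discE p f μ ≤ ∏ a ∈ B', mE a lam ^ p a := by
      rw [← Finset.prod_fiberwise_of_maps_to (g := f) (fun a ha => Finset.mem_image_of_mem f ha)
        (fun a => mE a lam ^ p a)]
      apply Finset.prod_le_prod (fun μ _ => hmtnn μ)
      intro μ hμ
      obtain ⟨a₀, ha₀, hfa₀⟩ := Finset.mem_image.mp hμ
      have hμne : μ ≠ 0 := hfa₀ ▸ (Finset.mem_filter.mp ha₀).2
      have hμE : μ ∈ discE := hfa₀ ▸ hm (hB'sub ha₀)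
      set D : Finset ℂ := B'.filter (fun a => f a = μ) with hD
      have hDsub : ↑D ⊆ discE := fun a ha => hB'sub (Finset.mem_of_mem_filter a ha)
      have hDval : ∀ a ∈ D, f a = μ := fun a ha => (Finset.mem_filter.mp ha).2
      have key : ‖μ‖ ≤ ∏ a ∈ D, mE a lam :=
        schwarz_prod hd hm hlam hflam hμE D hDsub hDval
      have hDnn : (0:ℝ) ≤ ∏ a ∈ D, mE a lam ^ p a :=
        Finset.prod_nonneg fun a _ => Real.rpow_nonneg (mE_nonneg' a lam) _
      rw [minTerm]
      split_ifs with htop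
      · exact hDnn
      · set t : ℝ := (fiberSup discE p f μ).toReal with ht
        have htnn : 0 ≤ t := ENNReal.toReal_nonneg
        have hpt : ∀ a ∈ D, p a ≤ t := by
          intro a ha
          have hmem : a ∈ {b ∈ discE | f b = μ} := ⟨hDsub ha, hDval a ha⟩
          have hle : ENNReal.ofReal (p a) ≤ fiberSup discE p f μ :=
            le_biSup (fun b => ENNReal.ofReal (p b)) hmem
          have := ENNReal.toReal_mono htop hle
          rwa [ENNReal.toReal_ofReal (hp a)] at this
        calc ‖μ‖ ^ t ≤ (∏ a ∈ D, mE a lam) ^ t :=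
              Real.rpow_le_rpow (norm_nonneg μ) key htnn
          _ = ∏ a ∈ D, mE a lam ^ t :=
              (Real.finset_prod_rpow D _ (fun a _ => mE_nonneg' a lam) t).symm
          _ ≤ ∏ a ∈ D, mE a lam ^ p a := by
              apply Finset.prod_le_prod
                (fun a _ => Real.rpow_nonneg (mE_nonneg' a lam) t)
              intro a ha
              have haE : a ∈ discE := hDsub ha
              have hane : lam ≠ a := by
                intro h
                exact hμne ((hDval a ha) ▸ h ▸ hflam ▸ rfl)
              exact Real.rpow_le_rpow_of_exponent_ge (mE_pos haE hlam hane)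
                (le_of_lt (mE_lt_one haE hlam)) (hpt a ha)
    have step3 : ∏ a ∈ B', mE a lam ^ p a = ∏ a ∈ B, mE a lam ^ p a := by
      rw [← Finset.prod_filter_mul_prod_filter_not B (fun a => f a ≠ 0)
        (fun a => mE a lam ^ p a)]
      have : ∏ a ∈ B.filter (fun a => ¬ f a ≠ 0), mE a lam ^ p a = 1 := by
        apply Finset.prod_eq_one
        intro a ha
        have h1 := Finset.mem_filter.mp ha
        have hfa : f a = 0 := not_not.mp h1.2
        rw [hcase a (hB h1.1) hfa, Real.rpow_zero]
      rw [this, mul_one]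
    calc infProd (f '' discE) (minTerm discE p f) ≤ ∏ μ ∈ C, minTerm discE p f μ := step1
      _ ≤ ∏ a ∈ B', mE a lam ^ p a := step2
      _ = ∏ a ∈ B, mE a lam ^ p a := step3

end MainProof

/-- Part 1: the Möbius map `mb lam` realizes the right-hand side. -/
lemma dMin_part1 {p : ℂ → ℝ} (hp : ∀ a, 0 ≤ p a) {lam : ℂ} (hlam : lam ∈ discE) :
    infProd ((mb lam) '' discE) (minTerm discE p (mb lam))
      = infProd discE (fun μ => mE μ lam ^ p μ) := by
  classical
  have hneg : -lam ∈ discE := by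
    show ‖-lam‖ < 1
    simpa [discE] using hlam
  set σ : ℂ → ℂ := mb (-lam) with hσdef
  have hfσ : ∀ μ ∈ discE, mb lam (σ μ) = μ := fun μ hμ => mb_mb hlam hμ
  have hσf : ∀ a ∈ discE, σ (mb lam a) = a := by
    intro a ha
    have h := mb_mb (b := -lam) hneg ha
    rw [neg_neg] at h
    exact h
  have hσmem : ∀ μ ∈ discE, σ μ ∈ discE := fun μ hμ => abs_mb_lt_one hneg hμ
  have hfmem : ∀ a ∈ discE, mb lam a ∈ discE := fun a ha => abs_mb_lt_one hlam ha
  have himg : mb lam '' discE = discE := by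
    ext μ; constructor
    · rintro ⟨a, ha, rfl⟩; exact hfmem a ha
    · intro hμ; exact ⟨σ μ, hσmem μ hμ, hfσ μ hμ⟩
  have hfib : ∀ μ ∈ discE, {a ∈ discE | mb lam a = μ} = ({σ μ} : Set ℂ) := by
    intro μ hμ; ext a; constructor
    · rintro ⟨haE, hfa⟩
      rw [Set.mem_singleton_iff, ← hfa]
      exact (hσf a haE).symm
    · intro ha
      rw [Set.mem_singleton_iff] at ha; subst ha
      exact ⟨hσmem μ hμ, hfσ μ hμ⟩
  have hfibS : ∀ μ ∈ discE, fiberSup discE p (mb lam) μ = ENNReal.ofReal (p (σ μ)) := by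
    intro μ hμ
    rw [fiberSup, hfib μ hμ]
    simp
  have hmt : ∀ μ ∈ discE, minTerm discE p (mb lam) μ = mE (σ μ) lam ^ p (σ μ) := by
    intro μ hμ
    rw [minTerm, hfibS μ hμ, if_neg ENNReal.ofReal_ne_top, ENNReal.toReal_ofReal (hp _)]
    congr 1
    have h1 : ‖μ‖ = ‖mb lam (σ μ)‖ := by rw [hfσ μ hμ]
    rw [h1, ← mE_eq_abs_mb, mE_symm]
  have hsets : {r : ℝ | ∃ B : Finset ℂ, ↑B ⊆ mb lam '' discE ∧
        r = ∏ μ ∈ B, minTerm discE p (mb lam) μ}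
      = {r : ℝ | ∃ B : Finset ℂ, ↑B ⊆ discE ∧ r = ∏ μ ∈ B, mE μ lam ^ p μ} := by
    ext r
    simp only [Set.mem_setOf_eq]
    constructor
    · rintro ⟨B, hB, rfl⟩
      have hBE : ∀ μ ∈ B, μ ∈ discE := fun μ hμ => himg ▸ hB hμ
      have hinj : ∀ x ∈ B, ∀ y ∈ B, σ x = σ y → x = y := by
        intro x hx y hy hxy
        rw [← hfσ x (hBE x hx), ← hfσ y (hBE y hy), hxy]
      refine ⟨B.image σ, ?_, ?_⟩
      · intro a ha
        obtain ⟨μ, hμ, rfl⟩ := Finset.mem_image.mp ha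
        exact hσmem μ (hBE μ hμ)
      · rw [Finset.prod_image hinj]
        exact Finset.prod_congr rfl fun μ hμ => hmt μ (hBE μ hμ)
    · rintro ⟨B, hB, rfl⟩
      have hinj : ∀ x ∈ B, ∀ y ∈ B, mb lam x = mb lam y → x = y := by
        intro x hx y hy hxy
        rw [← hσf x (hB hx), ← hσf y (hB hy), hxy]
      refine ⟨B.image (mb lam), ?_, ?_⟩
      · intro μ hμ
        obtain ⟨a, ha, rfl⟩ := Finset.mem_image.mp hμ
        exact ⟨a, hB ha, rfl⟩
      · rw [Finset.prod_image hinj]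
        apply Finset.prod_congr rfl
        intro a ha
        rw [hmt _ (hfmem a (hB ha)), hσf a (hB ha)]
  rw [infProd, infProd, hsets]

/-- on the unit disc, `d_E^min(p,λ) = ∏_{μ ∈ E} m_E(μ,λ)^{p(μ)}`. -/
theorem stmt_12 (p : ℂ → ℝ) (hp : ∀ a, 0 ≤ p a) (lam : ℂ) (hlam : lam ∈ discE) :
    dMin discE p lam = infProd discE (fun μ => mE μ lam ^ p μ) := by
  have hwit : infProd discE (fun μ => mE μ lam ^ p μ) ∈
      {r : ℝ | ∃ f : ℂ → ℂ, DifferentiableOn ℂ f discE ∧ MapsTo f discE discE ∧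
        f lam = 0 ∧ r = infProd (f '' discE) (minTerm discE p f)} :=
    ⟨mb lam, diffOn_mb hlam, mapsTo_mb hlam, mb_self, (dMin_part1 hp hlam).symm⟩
  rw [dMin]
  apply le_antisymm
  · apply csSup_le ⟨_, hwit⟩
    rintro r ⟨f, hd, hm, hflam, rfl⟩
    rw [infProd]
    apply le_csInf
    · exact ⟨1, (∅ : Finset ℂ), by simp, by simp⟩
    rintro t ⟨B, hB, rfl⟩
    exact dMin_part2 hp hlam hd hm hflam B hB
  · apply le_csSup
    · refine ⟨1, ?_⟩
      rintro r ⟨f, _, _, _, rfl⟩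
      exact infProd_le_one (minTerm_nonneg p f)
    · exact hwit
end
end
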